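/- arXiv:2407.14186 — 5 statements merged into one kernel-verified Lean document; each statement's English description precedes it below -/
import Mathlib

section
/- Let ν be a compactly supported Borel probability measure on ℝ that is not a Dirac mass, ρ a Borel probability measure on ℝ, c : ℝ³ → ℝ a bounded measurable function with |c| ≤ C_c, and g : ℝ → ℝ a bounded measurable function with |g| ≤ C_g ν-a.e. Write Y̲ = inf(supp ν) and Ȳ = sup(supp ν). Then for every x ∈ ℝ with Y̲ < x < Ȳ, the function Φ_x(h) = ∫ (y−x)·exp(−c(x,y,z)−g(y)−h·(y−x)) d(ν⊗ρ)(y,z) is continuous and strictly decreasing in h, satisfies Φ_x(h) > 0 for all sufficiently negative h and Φ_x(h) < 0 for all sufficiently large h, and hence admits a unique zero h(x) ∈ ℝ. Moreover, for every compact set K ⊂ (Y̲, Ȳ) there is a constant c_h, depending only on C_c, C_g, ν and K, such that sup_{x ∈ K} |h(x)| ≤ c_h. -/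
open MeasureTheory Filter Set

/-- Topological support of a Borel measure on ℝ. -/
noncomputable def msupp (ν : Measure ℝ) : Set ℝ := {x | ∀ U ∈ nhds x, 0 < ν U}

/-!
Write `t = y - x` and `s = -c (x, y, z) - g y`, so that `Φ x a = ∫ t * exp (s - a * t)` with `t`
and `s` bounded. Each integrand is antitone in `a`, strictly where `t ≠ 0`, and locally uniformly
bounded in `a`: this gives continuity and strict monotonicity. For `a ≤ 0`, the region `t > δ`
contributes at least `-a * δ ^ 2 * exp (-C) * ν (Ioi (x + δ))` (as `exp u ≥ u`) and the region
`t ≤ 0` at least `-R * exp C`, so `Φ x` grows at least linearly as `a → -∞`; the reflection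
`t ↦ -t` gives the linear decay as `a → ∞`. For `x` in a compact `K ⊆ (Y̲, Ȳ)` these slopes are
bounded below uniformly, which bounds the zeros.
-/

open Real

lemma abs_mul_exp_sub_le {t s a R C A : ℝ} (ht : |t| ≤ R) (hs : |s| ≤ C) (ha : |a| ≤ A) :
    |t * exp (s - a * t)| ≤ R * exp (C + A * R) := by
  have hat : |a * t| ≤ A * R := by
    rw [abs_mul]; exact mul_le_mul ha ht (abs_nonneg t) ((abs_nonneg a).trans ha)
  rw [abs_mul, abs_exp]
  refine mul_le_mul ht (exp_le_exp.2 ?_) (exp_pos _).le ((abs_nonneg t).trans ht)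
  linarith [le_abs_self s, neg_abs_le (a * t)]

lemma strictAnti_mul_exp_sub {t : ℝ} (s : ℝ) (ht : t ≠ 0) :
    StrictAnti fun a => t * exp (s - a * t) := by
  intro a b hab
  rcases ht.lt_or_gt with ht | ht
  · exact mul_lt_mul_of_neg_left (exp_lt_exp.2 (by nlinarith)) ht
  · exact mul_lt_mul_of_pos_left (exp_lt_exp.2 (by nlinarith)) ht

lemma antitone_mul_exp_sub (t s : ℝ) : Antitone fun a => t * exp (s - a * t) := by
  rcases eq_or_ne t 0 with rfl | ht
  · simpa using antitone_const
  · exact (strictAnti_mul_exp_sub s ht).antitone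

lemma neg_mul_sq_mul_exp_le_mul_exp_sub {t s a δ C : ℝ} (hs : |s| ≤ C) (ha : a ≤ 0)
    (hδ : 0 < δ) (htδ : δ < t) : -a * (δ ^ 2 * exp (-C)) ≤ t * exp (s - a * t) := by
  have hexp : exp (-C) * (-a * δ) ≤ exp (s - a * t) := by
    calc exp (-C) * (-a * δ) ≤ exp (-C) * exp (-a * t) := by
          gcongr
          nlinarith [add_one_le_exp (-a * t)]
      _ = exp (-C - a * t) := by rw [← exp_add]; ring_nf
      _ ≤ exp (s - a * t) := exp_le_exp.2 (by linarith [neg_abs_le s])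
  calc -a * (δ ^ 2 * exp (-C)) = δ * (exp (-C) * (-a * δ)) := by ring
    _ ≤ δ * exp (s - a * t) := by gcongr
    _ ≤ t * exp (s - a * t) := by gcongr

lemma neg_mul_exp_le_mul_exp_sub {t s a R C : ℝ} (ht : |t| ≤ R) (hs : |s| ≤ C) (ha : a ≤ 0) :
    -(R * exp C) ≤ t * exp (s - a * t) := by
  rcases le_total 0 t with h0 | h0
  · nlinarith [exp_pos (s - a * t), exp_pos C, abs_nonneg t]
  · have hexp : exp (s - a * t) ≤ exp C := exp_le_exp.2 (by nlinarith [le_abs_self s])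
    calc -(R * exp C) ≤ t * exp C := by nlinarith [neg_abs_le t, exp_pos C]
      _ ≤ t * exp (s - a * t) := mul_le_mul_of_nonpos_left hexp h0

noncomputable def expTiltIntegral {Ω : Type*} [MeasurableSpace Ω] (μ : Measure Ω)
    (t s : Ω → ℝ) (a : ℝ) : ℝ :=
  ∫ q, t q * exp (s q - a * t q) ∂μ

section ExpTilt

variable {Ω : Type*} [MeasurableSpace Ω] {μ : Measure Ω} {t s : Ω → ℝ} {R C : ℝ}

lemma aestronglyMeasurable_mul_exp_sub (ht : Measurable t) (hs : Measurable s) (a : ℝ) :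
    AEStronglyMeasurable (fun q => t q * exp (s q - a * t q)) μ := by
  fun_prop

lemma integrable_mul_exp_sub [IsFiniteMeasure μ] (ht : Measurable t) (hs : Measurable s)
    (htR : ∀ᵐ q ∂μ, |t q| ≤ R) (hsC : ∀ᵐ q ∂μ, |s q| ≤ C) (a : ℝ) :
    Integrable (fun q => t q * exp (s q - a * t q)) μ := by
  refine .of_bound (aestronglyMeasurable_mul_exp_sub ht hs a) (R * exp (C + |a| * R)) ?_
  filter_upwards [htR, hsC] with q htq hsq
  exact abs_mul_exp_sub_le htq hsq le_rfl

lemma continuous_expTiltIntegral [IsFiniteMeasure μ] (ht : Measurable t) (hs : Measurable s)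
    (htR : ∀ᵐ q ∂μ, |t q| ≤ R) (hsC : ∀ᵐ q ∂μ, |s q| ≤ C) :
    Continuous (expTiltIntegral μ t s) := by
  refine continuous_iff_continuousAt.2 fun a₀ => continuousAt_of_dominated
    (bound := fun _ => R * exp (C + (|a₀| + 1) * R))
    (.of_forall (aestronglyMeasurable_mul_exp_sub ht hs)) ?_ (integrable_const _)
    (.of_forall fun q => by fun_prop)
  filter_upwards [Metric.ball_mem_nhds a₀ one_pos] with a ha
  filter_upwards [htR, hsC] with q htq hsq
  refine abs_mul_exp_sub_le htq hsq ?_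
  have := abs_sub_abs_le_abs_sub a a₀
  rw [Metric.mem_ball, Real.dist_eq] at ha
  linarith

lemma strictAnti_expTiltIntegral [IsFiniteMeasure μ] (ht : Measurable t) (hs : Measurable s)
    (htR : ∀ᵐ q ∂μ, |t q| ≤ R) (hsC : ∀ᵐ q ∂μ, |s q| ≤ C) (ht0 : μ {q | t q ≠ 0} ≠ 0) :
    StrictAnti (expTiltIntegral μ t s) := by
  intro a b hab
  have hint := integrable_mul_exp_sub ht hs htR hsC
  rw [expTiltIntegral, expTiltIntegral, ← sub_pos, ← integral_sub (hint a) (hint b),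
    integral_pos_iff_support_of_nonneg_ae
      (.of_forall fun q => sub_nonneg.2 (antitone_mul_exp_sub (t q) (s q) hab.le))
      ((hint a).sub (hint b))]
  refine pos_iff_ne_zero.2 (mt (measure_mono_null fun q hq => ?_) ht0)
  exact (sub_pos.2 (strictAnti_mul_exp_sub (s q) hq hab)).ne'

lemma mul_measureReal_sub_le_integral [IsProbabilityMeasure μ] {f : Ω → ℝ} {S : Set Ω}
    (hS : MeasurableSet S) (hf : Integrable f μ) (K B : ℝ)
    (h : ∀ᵐ q ∂μ, K * S.indicator 1 q - B ≤ f q) :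
    K * μ.real S - B ≤ ∫ q, f q ∂μ := by
  have hind : Integrable (fun q => K * S.indicator 1 q) μ :=
    ((integrable_const 1).indicator hS).const_mul K
  calc K * μ.real S - B = ∫ q, (K * S.indicator 1 q - B) ∂μ := by
        rw [integral_sub hind (integrable_const B), integral_const_mul, integral_indicator_one hS,
          integral_const, probReal_univ, one_smul]
    _ ≤ ∫ q, f q ∂μ := integral_mono_ae (hind.sub (integrable_const B)) hf h

lemma neg_mul_sub_le_expTiltIntegral [IsProbabilityMeasure μ] (ht : Measurable t)
    (hs : Measurable s) (htR : ∀ᵐ q ∂μ, |t q| ≤ R) (hsC : ∀ᵐ q ∂μ, |s q| ≤ C)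
    {a δ : ℝ} (ha : a ≤ 0) (hδ : 0 < δ) :
    -a * (δ ^ 2 * exp (-C) * μ.real {q | δ < t q}) - R * exp C ≤ expTiltIntegral μ t s a := by
  rw [← mul_assoc]
  refine mul_measureReal_sub_le_integral (measurableSet_lt measurable_const ht)
    (integrable_mul_exp_sub ht hs htR hsC a) _ _ ?_
  filter_upwards [htR, hsC] with q htq hsq
  by_cases hq : δ < t q
  · rw [indicator_of_mem (show q ∈ {q | δ < t q} from hq), Pi.one_apply, mul_one]
    linarith [neg_mul_sq_mul_exp_le_mul_exp_sub hsq ha hδ hq,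
      mul_nonneg ((abs_nonneg _).trans htq) (exp_pos C).le]
  · rw [indicator_of_notMem (show q ∉ {q | δ < t q} from hq), mul_zero, zero_sub]
    exact neg_mul_exp_le_mul_exp_sub htq hsq ha

lemma expTiltIntegral_neg (a : ℝ) :
    expTiltIntegral μ (fun q => -t q) s (-a) = -expTiltIntegral μ t s a := by
  rw [expTiltIntegral, expTiltIntegral, ← integral_neg]
  congr 1 with q
  ring_nf

lemma expTiltIntegral_le_sub_mul [IsProbabilityMeasure μ] (ht : Measurable t)
    (hs : Measurable s) (htR : ∀ᵐ q ∂μ, |t q| ≤ R) (hsC : ∀ᵐ q ∂μ, |s q| ≤ C)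
    {a δ : ℝ} (ha : 0 ≤ a) (hδ : 0 < δ) :
    expTiltIntegral μ t s a ≤ R * exp C - a * (δ ^ 2 * exp (-C) * μ.real {q | t q < -δ}) := by
  have h := neg_mul_sub_le_expTiltIntegral (t := fun q => -t q) ht.neg hs
    (by simpa only [abs_neg] using htR) hsC (neg_nonpos.2 ha) hδ
  simp only [expTiltIntegral_neg, neg_neg, lt_neg] at h
  linarith

lemma tendsto_expTiltIntegral_atBot [IsProbabilityMeasure μ] (ht : Measurable t)
    (hs : Measurable s) (htR : ∀ᵐ q ∂μ, |t q| ≤ R) (hsC : ∀ᵐ q ∂μ, |s q| ≤ C)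
    {δ : ℝ} (hδ : 0 < δ) (hpos : 0 < μ.real {q | δ < t q}) :
    Tendsto (expTiltIntegral μ t s) atBot atTop := by
  have hκ : 0 < δ ^ 2 * exp (-C) * μ.real {q | δ < t q} := by positivity
  have hlin : Tendsto (fun a => -a * (δ ^ 2 * exp (-C) * μ.real {q | δ < t q}) - R * exp C)
      atBot atTop := by
    simpa only [sub_eq_add_neg] using tendsto_atTop_add_const_right _ (-(R * exp C))
      (tendsto_neg_atBot_atTop.atTop_mul_const hκ)
  refine tendsto_atTop_mono' atBot ?_ hlin
  filter_upwards [eventually_le_atBot 0] with a ha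
  exact neg_mul_sub_le_expTiltIntegral ht hs htR hsC ha hδ

lemma tendsto_expTiltIntegral_atTop [IsProbabilityMeasure μ] (ht : Measurable t)
    (hs : Measurable s) (htR : ∀ᵐ q ∂μ, |t q| ≤ R) (hsC : ∀ᵐ q ∂μ, |s q| ≤ C)
    {δ : ℝ} (hδ : 0 < δ) (hpos : 0 < μ.real {q | t q < -δ}) :
    Tendsto (expTiltIntegral μ t s) atTop atBot := by
  have h := tendsto_expTiltIntegral_atBot (t := fun q => -t q) ht.neg hs
    (by simpa only [abs_neg] using htR) hsC hδ (by simpa only [lt_neg] using hpos)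
  have heq : expTiltIntegral μ t s = fun a => -expTiltIntegral μ (fun q => -t q) s (-a) := by
    ext a; rw [expTiltIntegral_neg, neg_neg]
  rw [heq]
  exact tendsto_neg_atTop_atBot.comp (h.comp tendsto_neg_atTop_atBot)

lemma abs_le_of_expTiltIntegral_eq_zero [IsProbabilityMeasure μ] (ht : Measurable t)
    (hs : Measurable s) (htR : ∀ᵐ q ∂μ, |t q| ≤ R) (hsC : ∀ᵐ q ∂μ, |s q| ≤ C)
    {a δ m : ℝ} (hδ : 0 < δ) (hm : 0 < m) (hm₁ : m ≤ μ.real {q | δ < t q})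
    (hm₂ : m ≤ μ.real {q | t q < -δ}) (h0 : expTiltIntegral μ t s a = 0) :
    |a| ≤ R * exp C / (δ ^ 2 * exp (-C) * m) := by
  rw [le_div_iff₀ (by positivity)]
  rcases le_total a 0 with ha | ha
  · have h := neg_mul_sub_le_expTiltIntegral ht hs htR hsC ha hδ
    have hκ : -a * (δ ^ 2 * exp (-C) * m) ≤ -a * (δ ^ 2 * exp (-C) * μ.real {q | δ < t q}) := by
      gcongr; linarith
    rw [abs_of_nonpos ha]
    linarith
  · have h := expTiltIntegral_le_sub_mul ht hs htR hsC ha hδ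
    have hκ : a * (δ ^ 2 * exp (-C) * m) ≤ a * (δ ^ 2 * exp (-C) * μ.real {q | t q < -δ}) := by
      gcongr
    rw [abs_of_nonneg ha]
    linarith

end ExpTilt

lemma StrictAnti.existsUnique_eq {f : ℝ → ℝ} (hf : StrictAnti f) (hc : Continuous f)
    (hbot : Tendsto f atBot atTop) (htop : Tendsto f atTop atBot) (y : ℝ) : ∃! a, f a = y := by
  obtain ⟨a, ha⟩ := hc.surjective' hbot htop y
  exact ⟨a, ha, fun b hb => hf.injective (hb.trans ha.symm)⟩

section Support

variable {ν : Measure ℝ}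

lemma msupp_eq_support (ν : Measure ℝ) : msupp ν = ν.support := by
  ext x
  exact (Measure.mem_support_iff_forall x).symm

lemma ae_mem_Icc_sInf_sSup_msupp (hν : IsCompact (msupp ν)) :
    ∀ᵐ y ∂ν, y ∈ Icc (sInf (msupp ν)) (sSup (msupp ν)) := by
  filter_upwards [(msupp_eq_support ν).symm ▸ Measure.support_mem_ae (μ := ν)] with y hy
  exact ⟨csInf_le hν.bddBelow hy, le_csSup hν.bddAbove hy⟩

lemma nonempty_msupp (ν : Measure ℝ) [NeZero ν] : (msupp ν).Nonempty :=
  (msupp_eq_support ν).symm ▸ Measure.nonempty_support (NeZero.ne ν)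

lemma measureReal_Ioi_pos_of_lt_sSup_msupp [IsFiniteMeasure ν] [NeZero ν]
    (hν : IsCompact (msupp ν)) {u : ℝ} (hu : u < sSup (msupp ν)) : 0 < ν.real (Ioi u) :=
  ENNReal.toReal_pos (hν.sSup_mem (nonempty_msupp ν) _ (Ioi_mem_nhds hu)).ne'
    (measure_ne_top ν _)

lemma measureReal_Iio_pos_of_sInf_msupp_lt [IsFiniteMeasure ν] [NeZero ν]
    (hν : IsCompact (msupp ν)) {u : ℝ} (hu : sInf (msupp ν) < u) : 0 < ν.real (Iio u) :=
  ENNReal.toReal_pos (hν.sInf_mem (nonempty_msupp ν) _ (Iio_mem_nhds hu)).ne'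
    (measure_ne_top ν _)

end Support

section Product

variable (ν ρ : Measure ℝ) [IsProbabilityMeasure ρ]

lemma measureReal_prod_setOf_lt_fst_sub (x δ : ℝ) :
    (ν.prod ρ).real {q | δ < q.1 - x} = ν.real (Ioi (x + δ)) := by
  have : {q : ℝ × ℝ | δ < q.1 - x} = Prod.fst ⁻¹' Ioi (x + δ) := by
    ext q; simp only [mem_ofPred_eq, mem_preimage, mem_Ioi]; constructor <;> intro <;> linarith
  rw [this, measureReal_def, measureReal_def,
    measurePreserving_fst.measure_preimage measurableSet_Ioi.nullMeasurableSet]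

lemma measureReal_prod_setOf_fst_sub_lt (x δ : ℝ) :
    (ν.prod ρ).real {q | q.1 - x < -δ} = ν.real (Iio (x - δ)) := by
  have : {q : ℝ × ℝ | q.1 - x < -δ} = Prod.fst ⁻¹' Iio (x - δ) := by
    ext q; simp only [mem_ofPred_eq, mem_preimage, mem_Iio]; constructor <;> intro <;> linarith
  rw [this, measureReal_def, measureReal_def,
    measurePreserving_fst.measure_preimage measurableSet_Iio.nullMeasurableSet]

end Product

lemma IsCompact.exists_Icc_subset_of_subset_Ioo {K : Set ℝ} (hK : IsCompact K) {a b : ℝ}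
    (h : K ⊆ Ioo a b) : ∃ a' b', a < a' ∧ b' < b ∧ K ⊆ Icc a' b' := by
  rcases K.eq_empty_or_nonempty with rfl | hne
  · exact ⟨a + 1, b - 1, by linarith, by linarith, empty_subset _⟩
  · exact ⟨sInf K, sSup K, (h (hK.sInf_mem hne)).1, (h (hK.sSup_mem hne)).2,
      fun x hx => ⟨csInf_le hK.bddBelow hx, le_csSup hK.bddAbove hx⟩⟩

lemma ae_abs_fst_sub_le {ν ρ : Measure ℝ} [IsProbabilityMeasure ρ] {x : ℝ}
    (hν : IsCompact (msupp ν))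
    (hx : x ∈ Icc (sInf (msupp ν)) (sSup (msupp ν))) :
    ∀ᵐ q ∂ν.prod ρ, |q.1 - x| ≤ sSup (msupp ν) - sInf (msupp ν) := by
  filter_upwards [(measurePreserving_fst (μ := ν) (ν := ρ)).quasiMeasurePreserving.ae
    (ae_mem_Icc_sInf_sSup_msupp hν)] with q hq
  exact abs_sub_le_iff.2 ⟨by linarith [hx.1, hq.2], by linarith [hx.2, hq.1]⟩

section FstSub

variable {ν ρ : Measure ℝ} [IsProbabilityMeasure ν] [IsProbabilityMeasure ρ] {s : ℝ × ℝ → ℝ}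
  {C x : ℝ}

lemma strictAnti_expTiltIntegral_fst_sub (hν : IsCompact (msupp ν)) (hs : Measurable s)
    (hsC : ∀ᵐ q ∂ν.prod ρ, |s q| ≤ C) (hx : x ∈ Ioo (sInf (msupp ν)) (sSup (msupp ν))) :
    StrictAnti (expTiltIntegral (ν.prod ρ) (fun q => q.1 - x) s) := by
  have hpos : 0 < (ν.prod ρ).real {q | 0 < q.1 - x} := by
    rw [measureReal_prod_setOf_lt_fst_sub, add_zero]
    exact measureReal_Ioi_pos_of_lt_sSup_msupp hν hx.2
  refine strictAnti_expTiltIntegral (by fun_prop) hs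
    (ae_abs_fst_sub_le hν (Ioo_subset_Icc_self hx)) hsC fun h0 => hpos.ne' ?_
  exact (measureReal_eq_zero_iff).2 (measure_mono_null (fun q hq => hq.ne') h0)

lemma tendsto_expTiltIntegral_fst_sub_atBot (hν : IsCompact (msupp ν)) (hs : Measurable s)
    (hsC : ∀ᵐ q ∂ν.prod ρ, |s q| ≤ C) (hx : x ∈ Ioo (sInf (msupp ν)) (sSup (msupp ν))) :
    Tendsto (expTiltIntegral (ν.prod ρ) (fun q => q.1 - x) s) atBot atTop := by
  refine tendsto_expTiltIntegral_atBot (by fun_prop) hs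
    (ae_abs_fst_sub_le hν (Ioo_subset_Icc_self hx)) hsC (δ := (sSup (msupp ν) - x) / 2)
    (by linarith [hx.2]) ?_
  rw [measureReal_prod_setOf_lt_fst_sub]
  exact measureReal_Ioi_pos_of_lt_sSup_msupp hν (by linarith [hx.2])

lemma tendsto_expTiltIntegral_fst_sub_atTop (hν : IsCompact (msupp ν)) (hs : Measurable s)
    (hsC : ∀ᵐ q ∂ν.prod ρ, |s q| ≤ C) (hx : x ∈ Ioo (sInf (msupp ν)) (sSup (msupp ν))) :
    Tendsto (expTiltIntegral (ν.prod ρ) (fun q => q.1 - x) s) atTop atBot := by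
  refine tendsto_expTiltIntegral_atTop (by fun_prop) hs
    (ae_abs_fst_sub_le hν (Ioo_subset_Icc_self hx)) hsC (δ := (x - sInf (msupp ν)) / 2)
    (by linarith [hx.1]) ?_
  rw [measureReal_prod_setOf_fst_sub_lt]
  exact measureReal_Iio_pos_of_sInf_msupp_lt hν (by linarith [hx.1])

lemma exists_abs_le_of_expTiltIntegral_fst_sub_eq_zero (hν : IsCompact (msupp ν)) {K : Set ℝ}
    (hK : K ⊆ Ioo (sInf (msupp ν)) (sSup (msupp ν))) (hKc : IsCompact K) (C : ℝ) :
    ∃ ch : ℝ, ∀ x ∈ K, ∀ s : ℝ × ℝ → ℝ, Measurable s → (∀ᵐ q ∂ν.prod ρ, |s q| ≤ C) →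
      ∀ a, expTiltIntegral (ν.prod ρ) (fun q => q.1 - x) s a = 0 → |a| ≤ ch := by
  set Y := sInf (msupp ν)
  set Z := sSup (msupp ν)
  obtain ⟨k₁, k₂, hYk, hkZ, hKk⟩ := hKc.exists_Icc_subset_of_subset_Ioo hK
  obtain ⟨δ, hδ, hδY, hδZ⟩ : ∃ δ, 0 < δ ∧ Y < k₁ - δ ∧ k₂ + δ < Z :=
    ⟨min (k₁ - Y) (Z - k₂) / 2, half_pos (lt_min (by linarith) (by linarith)),
      by linarith [min_le_left (k₁ - Y) (Z - k₂)], by linarith [min_le_right (k₁ - Y) (Z - k₂)]⟩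
  set m := min (ν.real (Ioi (k₂ + δ))) (ν.real (Iio (k₁ - δ)))
  have hm : 0 < m := lt_min (measureReal_Ioi_pos_of_lt_sSup_msupp hν hδZ)
    (measureReal_Iio_pos_of_sInf_msupp_lt hν hδY)
  refine ⟨(Z - Y) * exp C / (δ ^ 2 * exp (-C) * m), fun x hx s hs hsC a ha => ?_⟩
  refine abs_le_of_expTiltIntegral_eq_zero (by fun_prop) hs
    (ae_abs_fst_sub_le hν (Ioo_subset_Icc_self (hK hx))) hsC hδ hm ?_ ?_ ha
  · rw [measureReal_prod_setOf_lt_fst_sub]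
    exact (min_le_left _ _).trans (measureReal_mono (Ioi_subset_Ioi (by linarith [(hKk hx).2])))
  · rw [measureReal_prod_setOf_fst_sub_lt]
    exact (min_le_right _ _).trans (measureReal_mono (Iio_subset_Iio (by linarith [(hKk hx).1])))

end FstSub

theorem stmt_0_general
    (ν ρ : Measure ℝ) [IsProbabilityMeasure ν] [IsProbabilityMeasure ρ]
    (hνc : IsCompact (msupp ν))
    (c : ℝ × ℝ × ℝ → ℝ) (Cc : ℝ) (hcm : Measurable c) (hcb : ∀ p, |c p| ≤ Cc)
    (g : ℝ → ℝ) (Cg : ℝ) (hgm : Measurable g) (hgb : ∀ᵐ y ∂ν, |g y| ≤ Cg)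
    (Φ : ℝ → ℝ → ℝ)
    (hΦ : ∀ x a, Φ x a = ∫ q : ℝ × ℝ,
        (q.1 - x) * Real.exp (-c (x, q.1, q.2) - g q.1 - a * (q.1 - x)) ∂(ν.prod ρ)) :
    (∀ x ∈ Set.Ioo (sInf (msupp ν)) (sSup (msupp ν)),
      Continuous (Φ x) ∧ StrictAnti (Φ x) ∧
      (∀ᶠ a in atBot, 0 < Φ x a) ∧ (∀ᶠ a in atTop, Φ x a < 0) ∧
      (∃! a : ℝ, Φ x a = 0)) ∧
    (∀ K : Set ℝ, K ⊆ Set.Ioo (sInf (msupp ν)) (sSup (msupp ν)) → IsCompact K →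
      ∃ ch : ℝ, ∀ x ∈ K, ∀ a : ℝ, Φ x a = 0 → |a| ≤ ch) := by
  have hΦ' (x : ℝ) : Φ x = expTiltIntegral (ν.prod ρ) (fun q => q.1 - x)
      (fun q => -c (x, q.1, q.2) - g q.1) := funext (hΦ x)
  have hs (x : ℝ) : Measurable fun q : ℝ × ℝ => -c (x, q.1, q.2) - g q.1 := by fun_prop
  have hsC (x : ℝ) : ∀ᵐ q ∂ν.prod ρ, |-c (x, q.1, q.2) - g q.1| ≤ Cc + Cg := by
    filter_upwards [(measurePreserving_fst (μ := ν) (ν := ρ)).quasiMeasurePreserving.ae hgb]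
      with q hq
    refine (abs_sub _ _).trans ?_
    rw [abs_neg]
    linarith [hcb (x, q.1, q.2)]
  refine ⟨fun x hx => ?_, fun K hK hKc => ?_⟩
  · have hcont := continuous_expTiltIntegral (by fun_prop) (hs x)
      (ae_abs_fst_sub_le hνc (Ioo_subset_Icc_self hx)) (hsC x)
    have hanti := strictAnti_expTiltIntegral_fst_sub hνc (hs x) (hsC x) hx
    have hbot := tendsto_expTiltIntegral_fst_sub_atBot hνc (hs x) (hsC x) hx
    have htop := tendsto_expTiltIntegral_fst_sub_atTop hνc (hs x) (hsC x) hx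
    rw [hΦ' x]
    exact ⟨hcont, hanti, hbot.eventually_gt_atTop 0, htop.eventually_lt_atBot 0,
      hanti.existsUnique_eq hcont hbot htop 0⟩
  · obtain ⟨ch, hch⟩ :=
      exists_abs_le_of_expTiltIntegral_fst_sub_eq_zero (ρ := ρ) hνc hK hKc (Cc + Cg)
    exact ⟨ch, fun x hx a ha => hch x hx _ (hs x) (hsC x) a (hΦ' x ▸ ha)⟩

theorem stmt_0
    (ν ρ : Measure ℝ) [IsProbabilityMeasure ν] [IsProbabilityMeasure ρ]
    (hνc : IsCompact (msupp ν))
    (hνnd : ∀ y₀ : ℝ, ν ≠ Measure.dirac y₀)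
    (c : ℝ × ℝ × ℝ → ℝ) (Cc : ℝ) (hcm : Measurable c) (hcb : ∀ p, |c p| ≤ Cc)
    (g : ℝ → ℝ) (Cg : ℝ) (hgm : Measurable g) (hgb : ∀ᵐ y ∂ν, |g y| ≤ Cg)
    (Φ : ℝ → ℝ → ℝ)
    (hΦ : ∀ x a, Φ x a = ∫ q : ℝ × ℝ,
        (q.1 - x) * Real.exp (-c (x, q.1, q.2) - g q.1 - a * (q.1 - x)) ∂(ν.prod ρ)) :
    (∀ x ∈ Set.Ioo (sInf (msupp ν)) (sSup (msupp ν)),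
      Continuous (Φ x) ∧ StrictAnti (Φ x) ∧
      (∀ᶠ a in atBot, 0 < Φ x a) ∧ (∀ᶠ a in atTop, Φ x a < 0) ∧
      (∃! a : ℝ, Φ x a = 0)) ∧
    (∀ K : Set ℝ, K ⊆ Set.Ioo (sInf (msupp ν)) (sSup (msupp ν)) → IsCompact K →
      ∃ ch : ℝ, ∀ x ∈ K, ∀ a : ℝ, Φ x a = 0 → |a| ≤ ch) :=
  stmt_0_general ν ρ hνc c Cc hcm hcb g Cg hgm hgb Φ hΦ
end

section
/- Let μ, ν, ρ be Borel probability measures on ℝ with μ and ν compactly supported, and suppose ν is not a Dirac mass. Assume there exists a probability measure π̄ on ℝ³ with first marginal μ, second marginal ν, satisfying the martingale property ∫ (y−x) dπ̄_{y,z|x}(y,z) = 0 for μ-a.e. x, and such that dπ̄/d(μ⊗ν⊗ρ) = exp(−p) for a (μ⊗ν⊗ρ)-essentially bounded function p. Then sup(supp μ) < sup(supp ν) and inf(supp μ) > inf(supp ν). -/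
open MeasureTheory Filter Set

/-!
Let `a = sup supp μ` and suppose `sup supp ν ≤ a`. Started from a point of `supp μ` within `δ`
of `a`, the martingale rises by less than `δ`; but the density of `π̄` is at least `e^{-C}`, so
unless `ν = δ_a` it falls by more than `ε - δ` with conditional probability at least
`e^{-C} ν(y ≤ a - ε)` for some `ε > 0`. For `δ` small the mean displacement from `{x > a - δ}` is
then negative, contradicting the martingale property. The infimum is the mirror image, handled
by multiplying all displacements by the sign `σ = -1`.
-/

lemma msupp_eq_support_s3 (m : Measure ℝ) : msupp m = m.support := by
  ext x
  exact (Measure.mem_support_iff_forall x).symm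

lemma ae_mem_msupp (m : Measure ℝ) : ∀ᵐ x ∂m, x ∈ msupp m := by
  rw [msupp_eq_support_s3]
  exact Measure.support_mem_ae

lemma sSup_msupp_mem {m : Measure ℝ} [NeZero m] (hm : IsCompact (msupp m)) :
    sSup (msupp m) ∈ msupp m :=
  hm.sSup_mem (msupp_eq_support_s3 m ▸ Measure.nonempty_support (NeZero.ne m))

lemma sInf_msupp_mem {m : Measure ℝ} [NeZero m] (hm : IsCompact (msupp m)) :
    sInf (msupp m) ∈ msupp m :=
  hm.sInf_mem (msupp_eq_support_s3 m ▸ Measure.nonempty_support (NeZero.ne m))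

lemma integrable_of_ae_mem_of_isBounded {α E : Type*} [MeasurableSpace α] [NormedAddCommGroup E]
    {μ : Measure α} [IsFiniteMeasure μ] {f : α → E} {K : Set E}
    (hf : AEStronglyMeasurable f μ) (hK : Bornology.IsBounded K) (hfK : ∀ᵐ x ∂μ, f x ∈ K) :
    Integrable f μ := by
  obtain ⟨C, hC⟩ := isBounded_iff_forall_norm_le.1 hK
  exact .of_bound hf C (hfK.mono fun x hx => hC _ hx)

lemma mul_le_withDensity_apply {α : Type*} [MeasurableSpace α] {m : Measure α}
    {f : α → ENNReal} {c : ENNReal} (hf : ∀ᵐ x ∂m, c ≤ f x) {s : Set α} (hs : MeasurableSet s) :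
    c * m s ≤ m.withDensity f s := by
  rw [withDensity_apply _ hs, ← setLIntegral_const]
  exact lintegral_mono_ae (ae_restrict_of_ae hf)

lemma eq_dirac_of_forall_measure_le_sub_eq_zero {ν : Measure ℝ} [IsProbabilityMeasure ν]
    {σ a : ℝ} (hσ : σ ≠ 0) (hle : ∀ᵐ y ∂ν, σ * y ≤ σ * a)
    (h : ∀ ε > 0, ν {y | σ * y ≤ σ * a - ε} = 0) : ν = Measure.dirac a := by
  have hlt : ν {y | σ * y < σ * a} = 0 := by
    refine measure_mono_null (fun y (hy : σ * y < σ * a) => ?_)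
      (measure_iUnion_null fun n : ℕ => h (1 / (n + 1)) Nat.one_div_pos_of_nat)
    obtain ⟨n, hn⟩ := exists_nat_one_div_lt (sub_pos.2 hy)
    exact mem_iUnion.2 ⟨n, by simp only [mem_ofPred_eq]; linarith⟩
  have hae : ∀ᵐ y ∂ν, y = a := by
    filter_upwards [hle, measure_eq_zero_iff_ae_notMem.1 hlt] with y hy hy'
    exact mul_left_cancel₀ hσ (le_antisymm hy (not_lt.1 hy'))
  simpa using (ProbabilityTheory.hasLaw_dirac_of_ae_eq (X := id) hae).map_eq

section Martingale

variable {Ω : Type*} [MeasurableSpace Ω]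

lemma exp_neg_mul_measureReal_le_of_eq_withDensity {μ ν : Measure ℝ} {ρ : Measure Ω}
    [SFinite μ] [SFinite ν] [IsProbabilityMeasure ρ] {π : Measure (ℝ × ℝ × Ω)}
    [IsFiniteMeasure π] {p : ℝ × ℝ × Ω → ℝ} {C : ℝ}
    (hπ : π = (μ.prod (ν.prod ρ)).withDensity fun q => ENNReal.ofReal (Real.exp (-p q)))
    (hp : ∀ᵐ q ∂μ.prod (ν.prod ρ), |p q| ≤ C) {S T : Set ℝ} (hS : MeasurableSet S)
    (hT : MeasurableSet T) :
    Real.exp (-C) * (μ.real S * ν.real T) ≤ π.real (S ×ˢ T ×ˢ univ) := by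
  have hdens : ∀ᵐ q ∂μ.prod (ν.prod ρ),
      ENNReal.ofReal (Real.exp (-C)) ≤ ENNReal.ofReal (Real.exp (-p q)) := by
    filter_upwards [hp] with q hq
    exact ENNReal.ofReal_le_ofReal (Real.exp_le_exp.2 (by linarith [le_abs_self (p q)]))
  have := mul_le_withDensity_apply hdens (hS.prod (hT.prod MeasurableSet.univ))
  rw [Measure.prod_prod, Measure.prod_prod, measure_univ, mul_one, ← hπ] at this
  simpa [measureReal_def, ENNReal.toReal_mul, Real.exp_nonneg] using
    ENNReal.toReal_mono (measure_ne_top _ _) this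

lemma setIntegral_preimage_fst_sub_eq_zero [StandardBorelSpace Ω] [Nonempty Ω] {π : Measure (ℝ × ℝ × Ω)} [IsFiniteMeasure π]
    (hM : ∀ᵐ x ∂π.fst, ∫ q : ℝ × Ω, (q.1 - x) ∂π.condKernel x = 0)
    (hint : Integrable (fun q => q.2.1 - q.1) π) {S : Set ℝ} (hS : MeasurableSet S) :
    ∫ q in Prod.fst ⁻¹' S, (q.2.1 - q.1) ∂π = 0 := by
  rw [← integral_indicator (measurable_fst hS),
    ← Measure.integral_condKernel (hint.indicator (measurable_fst hS))]
  refine integral_eq_zero_of_ae ?_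
  filter_upwards [hM] with x hx
  by_cases hxS : x ∈ S
  · simpa [indicator_of_mem, hxS] using hx
  · simp [hxS]

lemma measure_le_sub_eq_zero_of_martingale [StandardBorelSpace Ω] [Nonempty Ω]
    {μ ν : Measure ℝ} [IsFiniteMeasure ν] {π : Measure (ℝ × ℝ × Ω)} [IsFiniteMeasure π]
    (hπX : π.map Prod.fst = μ) (hM : ∀ᵐ x ∂μ, ∫ q : ℝ × Ω, (q.1 - x) ∂π.condKernel x = 0)
    (hint : Integrable (fun q => q.2.1 - q.1) π) {c : ℝ} (hc : 0 < c)
    (hrect : ∀ S T, MeasurableSet S → MeasurableSet T →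
      c * (μ.real S * ν.real T) ≤ π.real (S ×ˢ T ×ˢ univ))
    {σ a : ℝ} (ha : a ∈ msupp μ) (hY : ∀ᵐ q ∂π, σ * q.2.1 ≤ σ * a) {ε : ℝ} (hε : 0 < ε) :
    ν {y | σ * y ≤ σ * a - ε} = 0 := by
  set T := {y | σ * y ≤ σ * a - ε}
  by_contra hT
  have hTm : MeasurableSet T := measurableSet_le (by fun_prop) (by fun_prop)
  have ht : 0 < ν.real T := ENNReal.toReal_pos hT (measure_ne_top _ _)
  set δ := c * ε * ν.real T / 2
  have hδ : 0 < δ := by positivity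
  set S := {x | σ * a - δ < σ * x}
  have hSm : MeasurableSet S := measurableSet_lt (by fun_prop) (by fun_prop)
  have hμS : 0 < μ.real S := by
    refine ENNReal.toReal_pos (ha S (IsOpen.mem_nhds ?_ ?_)).ne' ?_
    · exact isOpen_lt (by fun_prop) (by fun_prop)
    · show σ * a - δ < σ * a; linarith
    · rw [← hπX]; exact measure_ne_top _ _
  set A : Set (ℝ × ℝ × Ω) := Prod.fst ⁻¹' S
  set B := S ×ˢ T ×ˢ (univ : Set Ω)
  have hAm : MeasurableSet A := measurable_fst hSm
  have hBm : MeasurableSet B := hSm.prod (hTm.prod MeasurableSet.univ)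
  have hBA : B ⊆ A := fun q hq => hq.1
  have hπA : π.real A = μ.real S := by
    rw [measureReal_def, measureReal_def, ← hπX, Measure.map_apply measurable_fst hSm]
  have hdrift : ∀ᵐ q ∂π, q ∈ A → σ * (q.2.1 - q.1) ≤ δ - ε * B.indicator 1 q := by
    filter_upwards [hY] with q hq hqA
    have hqS : σ * a - δ < σ * q.1 := hqA
    by_cases hqB : q ∈ B
    · have hqT : σ * q.2.1 ≤ σ * a - ε := hqB.2.1
      simp only [indicator_of_mem hqB, Pi.one_apply]
      linarith
    · simp only [indicator_of_notMem hqB]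
      linarith
  have hzero : ∫ q in A, σ * (q.2.1 - q.1) ∂π = 0 := by
    rw [integral_const_mul, setIntegral_preimage_fst_sub_eq_zero (by rwa [Measure.fst, hπX]) hint hSm,
      mul_zero]
  have hind : Integrable (fun q => ε * B.indicator 1 q) π :=
    ((integrable_const (1 : ℝ)).indicator hBm).const_mul ε
  have hle := setIntegral_mono_on_ae (g := fun q => δ - ε * B.indicator 1 q)
    (hint.const_mul σ).integrableOn
    ((integrable_const δ).sub hind).integrableOn hAm hdrift
  rw [hzero, integral_sub (integrable_const _).integrableOn hind.integrableOn, integral_const_mul,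
    integral_indicator_one hBm, setIntegral_const, measureReal_restrict_apply hBm,
    inter_eq_left.2 hBA, hπA, smul_eq_mul] at hle
  have hπB : 2 * δ * μ.real S ≤ ε * π.real B := by
    have := mul_le_mul_of_nonneg_left (hrect S T hSm hTm) hε.le
    simp only [δ]
    linarith
  linarith [mul_pos hμS hδ]

end Martingale

theorem stmt_3_general
    (μ ν ρ : Measure ℝ)
    [IsProbabilityMeasure μ] [IsProbabilityMeasure ν] [IsProbabilityMeasure ρ]
    (hμc : IsCompact (msupp μ)) (hνc : IsCompact (msupp ν))
    (hνnd : ∀ y₀ : ℝ, ν ≠ Measure.dirac y₀)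
    (pbar : ℝ × ℝ × ℝ → ℝ) (Cp : ℝ)
    (hpb : ∀ᵐ q ∂(μ.prod (ν.prod ρ)), |pbar q| ≤ Cp)
    (πbar : Measure (ℝ × ℝ × ℝ)) [IsProbabilityMeasure πbar]
    (hπbar : πbar = (μ.prod (ν.prod ρ)).withDensity
        (fun q => ENNReal.ofReal (Real.exp (-pbar q))))
    (hπbarX : πbar.map Prod.fst = μ)
    (hπbarM : ∀ᵐ x ∂μ, ∫ q : ℝ × ℝ, (q.1 - x) ∂(πbar.condKernel x) = 0) :
    sSup (msupp μ) < sSup (msupp ν) ∧ sInf (msupp ν) < sInf (msupp μ) := by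
  have hac : πbar ≪ μ.prod (ν.prod ρ) := hπbar ▸ withDensity_absolutelyContinuous _ _
  have hX : ∀ᵐ q ∂πbar, q.1 ∈ msupp μ :=
    hac.ae_le (Measure.quasiMeasurePreserving_fst.ae (ae_mem_msupp μ))
  have hY : ∀ᵐ q ∂πbar, q.2.1 ∈ msupp ν := hac.ae_le
    (Measure.quasiMeasurePreserving_snd.ae (Measure.quasiMeasurePreserving_fst.ae (ae_mem_msupp ν)))
  have hint : Integrable (fun q => q.2.1 - q.1) πbar :=
    (integrable_of_ae_mem_of_isBounded (by fun_prop) hνc.isBounded hY).sub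
      (integrable_of_ae_mem_of_isBounded (by fun_prop) hμc.isBounded hX)
  have hrect := fun S T => exp_neg_mul_measureReal_le_of_eq_withDensity (S := S) (T := T) hπbar hpb
  have key : ∀ σ a, σ ≠ 0 → a ∈ msupp μ → (∀ y ∈ msupp ν, σ * y ≤ σ * a) → ν = Measure.dirac a :=
    fun σ a hσ ha hνa => eq_dirac_of_forall_measure_le_sub_eq_zero hσ
      ((ae_mem_msupp ν).mono hνa) fun ε hε => measure_le_sub_eq_zero_of_martingale hπbarX
        hπbarM hint (Real.exp_pos _) hrect ha (hY.mono fun q hq => hνa _ hq) hε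
  constructor
  · by_contra! h
    exact hνnd _ (key 1 _ one_ne_zero (sSup_msupp_mem hμc)
      fun y hy => by simpa using (le_csSup hνc.bddAbove hy).trans h)
  · by_contra! h
    exact hνnd _ (key (-1) _ (by norm_num) (sInf_msupp_mem hμc)
      fun y hy => by simpa using h.trans (csInf_le hνc.bddBelow hy))

theorem stmt_3
    (μ ν ρ : Measure ℝ)
    [IsProbabilityMeasure μ] [IsProbabilityMeasure ν] [IsProbabilityMeasure ρ]
    (hμc : IsCompact (msupp μ)) (hνc : IsCompact (msupp ν))
    (hνnd : ∀ y₀ : ℝ, ν ≠ Measure.dirac y₀)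
    (pbar : ℝ × ℝ × ℝ → ℝ) (Cp : ℝ) (hpm : Measurable pbar)
    (hpb : ∀ᵐ q ∂(μ.prod (ν.prod ρ)), |pbar q| ≤ Cp)
    (πbar : Measure (ℝ × ℝ × ℝ)) [IsProbabilityMeasure πbar]
    (hπbar : πbar = (μ.prod (ν.prod ρ)).withDensity
        (fun q => ENNReal.ofReal (Real.exp (-pbar q))))
    (hπbarX : πbar.map Prod.fst = μ) (hπbarY : πbar.map (fun q => q.2.1) = ν)
    (hπbarM : ∀ᵐ x ∂μ, ∫ q : ℝ × ℝ, (q.1 - x) ∂(πbar.condKernel x) = 0) :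
    sSup (msupp μ) < sSup (msupp ν) ∧ sInf (msupp ν) < sInf (msupp μ) :=
  stmt_3_general μ ν ρ hμc hνc hνnd pbar Cp hpb πbar hπbar hπbarX hπbarM
end

section
/- Let μ, ν, ρ be Borel probability measures on ℝ with μ and ν compactly supported, let |X| (resp. |Y|) denote the essential supremum of |x| under μ (resp. of |y| under ν), and let c : ℝ³ → ℝ be measurable. Fix C₀ > 0 and set κ = exp(−C₀). Let (f,g,h) and (f′,g′,h′) be measurable triples such that |c(x,y,z)+f(x)+g(y)+h(x)(y−x)| ≤ C₀ and |c(x,y,z)+f′(x)+g′(y)+h′(x)(y−x)| ≤ C₀ hold (μ⊗ν⊗ρ)-a.e. Define D_f(f,g,h)(x) = ∫ exp(−c(x,y,z)−f(x)−g(y)−h(x)(y−x)) d(ν⊗ρ) − 1, D_g(f,g,h)(y) = ∫ exp(−c(x,y,z)−f(x)−g(y)−h(x)(y−x)) d(μ⊗ρ) − 1, and D_h(f,g,h)(x) = ∫ (y−x)·exp(−c(x,y,z)−f(x)−g(y)−h(x)(y−x)) d(ν⊗ρ). Then, writing E² = ∫∫ |f′(x)−f(x)+g′(y)−g(y)+(h′(x)−h(x))(y−x)|²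 d(μ⊗ν), one has ‖D_f(f′,g′,h′) − D_f(f,g,h)‖²_{L²(μ)} ≤ κ^{−2}·E², ‖D_g(f′,g′,h′) − D_g(f,g,h)‖²_{L²(ν)} ≤ κ^{−2}·E², and ‖D_h(f′,g′,h′) − D_h(f,g,h)‖²_{L²(μ)} ≤ κ^{−2}·(|X|+|Y|)²·E². -/
/-!
Each of the three increments is, for a.e. outer variable, the integral over the remaining
variables of a weight times `exp (-U') - exp (-U)`, where `U` and `U'` are the two potentials
`c + f + g + h (y - x)`. Both potentials are bounded by `C₀`, so `exp` is `exp C₀`-Lipschitz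
on their range, and Jensen's inequality on each slice bounds the square of that integral by the
integral of the square. Integrating the slices recovers the integral of `(U' - U)²` over
`μ ⊗ ν ⊗ ρ`, which equals `E²` since `U' - U` does not depend on `z`. The weight is `1` for
`D_f` and `D_g` and `y - x`, bounded by `|X| + |Y|`, for `D_h`.
-/

open MeasureTheory Filter Set

/-- Functional derivative of the dual functional `G` in `f`. -/
noncomputable def Df (ν ρ : Measure ℝ) (c : ℝ × ℝ × ℝ → ℝ) (f g h : ℝ → ℝ) (x : ℝ) : ℝ :=
  (∫ q : ℝ × ℝ, Real.exp (-c (x, q.1, q.2) - f x - g q.1 - h x * (q.1 - x)) ∂(ν.prod ρ)) - 1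

/-- Functional derivative of the dual functional `G` in `g`. -/
noncomputable def Dg (μ ρ : Measure ℝ) (c : ℝ × ℝ × ℝ → ℝ) (f g h : ℝ → ℝ) (y : ℝ) : ℝ :=
  (∫ q : ℝ × ℝ, Real.exp (-c (q.1, y, q.2) - f q.1 - g y - h q.1 * (y - q.1)) ∂(μ.prod ρ)) - 1

/-- Functional derivative of the dual functional `G` in `h`. -/
noncomputable def Dh (ν ρ : Measure ℝ) (c : ℝ × ℝ × ℝ → ℝ) (f g h : ℝ → ℝ) (x : ℝ) : ℝ :=
  ∫ q : ℝ × ℝ,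
    (q.1 - x) * Real.exp (-c (x, q.1, q.2) - f x - g q.1 - h x * (q.1 - x)) ∂(ν.prod ρ)

theorem Real.abs_exp_sub_exp_le_exp_mul {a b M : ℝ} (ha : a ≤ M) (hb : b ≤ M) :
    |Real.exp a - Real.exp b| ≤ Real.exp M * |a - b| := by
  wlog hba : b ≤ a generalizing a b
  · rw [abs_sub_comm, abs_sub_comm a]
    exact this hb ha (le_of_not_ge hba)
  have hexp : Real.exp a - Real.exp b ≤ Real.exp a * (a - b) := by
    have h1 := Real.add_one_le_exp (b - a)
    have h2 : Real.exp b = Real.exp a * Real.exp (b - a) := by rw [← Real.exp_add]; ring_nf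
    nlinarith [Real.exp_pos a]
  rw [abs_of_nonneg (sub_nonneg.2 (Real.exp_le_exp.2 hba)), abs_of_nonneg (sub_nonneg.2 hba)]
  calc Real.exp a - Real.exp b ≤ Real.exp a * (a - b) := hexp
    _ ≤ Real.exp M * (a - b) := by gcongr

section Slices

variable {α β γ : Type*} [MeasurableSpace α] [MeasurableSpace β] [MeasurableSpace γ]

theorem MeasureTheory.MeasurePreserving.integral_comp_of_aestronglyMeasurable
    {E : Type*} [NormedAddCommGroup E] [NormedSpace ℝ E] {a : Measure α} {b : Measure β}
    {π : α → β} (hπ : MeasurePreserving π a b) {G : β → E} (hG : AEStronglyMeasurable G b) :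
    ∫ x, G (π x) ∂a = ∫ y, G y ∂b := by
  rw [← hπ.map_eq] at hG ⊢
  exact (integral_map hπ.aemeasurable hG).symm

theorem measurePreserving_prod_fst_snd_fst (μ : Measure α) (ν : Measure β) (ρ : Measure γ)
    [SFinite μ] [SFinite ν] [IsProbabilityMeasure ρ] :
    MeasurePreserving (fun p : α × β × γ => (p.1, p.2.1)) (μ.prod (ν.prod ρ)) (μ.prod ν) :=
  (MeasurePreserving.id μ).prod measurePreserving_fst

theorem measurePreserving_prod_left_comm (μ : Measure α) (ν : Measure β) (ρ : Measure γ)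
    [SFinite μ] [SFinite ν] [SFinite ρ] :
    MeasurePreserving (fun p : β × α × γ => (p.2.1, p.1, p.2.2))
      (ν.prod (μ.prod ρ)) (μ.prod (ν.prod ρ)) :=
  ((measurePreserving_prodAssoc μ ν ρ).comp
    (Measure.measurePreserving_swap.prod (MeasurePreserving.id ρ))).comp
    (measurePreserving_prodAssoc ν μ ρ).symm

theorem sq_integral_le_integral_sq {m : Measure α} [IsProbabilityMeasure m] {F : α → ℝ}
    (hF : MemLp F 2 m) : (∫ a, F a ∂m) ^ 2 ≤ ∫ a, F a ^ 2 ∂m :=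
  (Even.convexOn_pow even_two).map_integral_le (continuous_pow 2).continuousOn isClosed_univ
    (ae_of_all _ fun _ => mem_univ _) (hF.integrable one_le_two) hF.integrable_sq

theorem integral_sq_integral_le_integral_sq_prod {m : Measure α} {n : Measure β} [SFinite m]
    [IsProbabilityMeasure n] {φ : α × β → ℝ} (hφ : MemLp φ 2 (m.prod n)) :
    ∫ x, (∫ y, φ (x, y) ∂n) ^ 2 ∂m ≤ ∫ p, φ p ^ 2 ∂(m.prod n) := by
  have hφ2 := hφ.integrable_sq
  rw [integral_prod _ hφ2]
  refine integral_mono_of_nonneg (ae_of_all _ fun _ => sq_nonneg _) hφ2.integral_prod_left ?_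
  filter_upwards [hφ.aestronglyMeasurable.prodMk_left, hφ2.prod_right_ae] with x hmeas hsq
  exact sq_integral_le_integral_sq ((memLp_two_iff_integrable_sq hmeas).2 hsq)

theorem integrable_mul_exp_neg {μ : Measure α} [IsFiniteMeasure μ] {w V : α → ℝ} {C W : ℝ}
    (hw : AEStronglyMeasurable w μ) (hV : AEStronglyMeasurable V μ)
    (hwW : ∀ᵐ x ∂μ, |w x| ≤ W) (hVC : ∀ᵐ x ∂μ, -C ≤ V x) :
    Integrable (fun x => w x * Real.exp (-V x)) μ := by
  refine .of_bound (hw.mul (Real.continuous_exp.comp_aestronglyMeasurable hV.neg))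
    (W * Real.exp C) ?_
  filter_upwards [hwW, hVC] with x hwx hVx
  simp only [norm_mul, Real.norm_eq_abs, Real.abs_exp]
  exact mul_le_mul hwx (Real.exp_le_exp.2 (by linarith)) (Real.exp_pos _).le
    ((abs_nonneg _).trans hwx)

theorem integral_sq_sub_integral_mul_exp_le {m : Measure α} {n : Measure β} [IsFiniteMeasure m]
    [IsProbabilityMeasure n] {U U' w : α × β → ℝ} {C W : ℝ}
    (hU : AEStronglyMeasurable U (m.prod n)) (hU' : AEStronglyMeasurable U' (m.prod n))
    (hw : AEStronglyMeasurable w (m.prod n))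
    (hUC : ∀ᵐ p ∂(m.prod n), |U p| ≤ C) (hU'C : ∀ᵐ p ∂(m.prod n), |U' p| ≤ C)
    (hwW : ∀ᵐ p ∂(m.prod n), |w p| ≤ W) :
    ∫ x, (∫ y, w (x, y) * Real.exp (-U' (x, y)) ∂n
        - ∫ y, w (x, y) * Real.exp (-U (x, y)) ∂n) ^ 2 ∂m
      ≤ Real.exp C ^ 2 * W ^ 2 * ∫ p, (U' p - U p) ^ 2 ∂(m.prod n) := by
  set φ : α × β → ℝ := fun p => w p * (Real.exp (-U' p) - Real.exp (-U p))
  have hφ_le : ∀ᵐ p ∂(m.prod n), |φ p| ≤ Real.exp C * W * |U' p - U p| := by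
    filter_upwards [hUC, hU'C, hwW] with p hUp hU'p hwp
    have hLip := Real.abs_exp_sub_exp_le_exp_mul ((neg_le_abs _).trans hU'p)
      ((neg_le_abs _).trans hUp)
    rw [neg_sub_neg, abs_sub_comm (U p)] at hLip
    calc |φ p| = |w p| * |Real.exp (-U' p) - Real.exp (-U p)| := abs_mul _ _
      _ ≤ W * (Real.exp C * |U' p - U p|) := by
        gcongr
        exact (abs_nonneg _).trans hwp
      _ = Real.exp C * W * |U' p - U p| := by ring
  have hΔ : MemLp (fun p => U' p - U p) 2 (m.prod n) :=
    (MemLp.of_bound hU' C (by simpa using hU'C)).sub (MemLp.of_bound hU C (by simpa using hUC))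
  have hφ : MemLp φ 2 (m.prod n) := by
    refine (hΔ.const_mul (Real.exp C * W)).of_le (hw.mul
      ((Real.continuous_exp.comp_aestronglyMeasurable hU'.neg).sub
        (Real.continuous_exp.comp_aestronglyMeasurable hU.neg))) ?_
    filter_upwards [hφ_le, hwW] with p hp hwp
    simpa [abs_mul, abs_of_nonneg ((abs_nonneg _).trans hwp)] using hp
  have hexpU := integrable_mul_exp_neg hw hU hwW (hUC.mono fun _ => neg_le_of_abs_le)
  have hexpU' := integrable_mul_exp_neg hw hU' hwW (hU'C.mono fun _ => neg_le_of_abs_le)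
  calc _ = ∫ x, (∫ y, φ (x, y) ∂n) ^ 2 ∂m := by
        refine integral_congr_ae ?_
        filter_upwards [hexpU.prod_right_ae, hexpU'.prod_right_ae] with x hx hx'
        simp only [φ, mul_sub, integral_sub hx' hx]
    _ ≤ ∫ p, φ p ^ 2 ∂(m.prod n) := integral_sq_integral_le_integral_sq_prod hφ
    _ ≤ ∫ p, (Real.exp C * W) ^ 2 * (U' p - U p) ^ 2 ∂(m.prod n) := by
        refine integral_mono_ae hφ.integrable_sq (hΔ.integrable_sq.const_mul _) ?_
        filter_upwards [hφ_le] with p hp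
        calc φ p ^ 2 = |φ p| ^ 2 := (sq_abs _).symm
          _ ≤ (Real.exp C * W * |U' p - U p|) ^ 2 := by gcongr
          _ = (Real.exp C * W) ^ 2 * (U' p - U p) ^ 2 := by rw [mul_pow, sq_abs]
    _ = _ := by rw [integral_const_mul]; ring

end Slices

def dualPotential (c : ℝ × ℝ × ℝ → ℝ) (f g h : ℝ → ℝ) (p : ℝ × ℝ × ℝ) : ℝ :=
  c p + f p.1 + g p.2.1 + h p.1 * (p.2.1 - p.1)

section DualPotential

variable {μ ν ρ : Measure ℝ} {c : ℝ × ℝ × ℝ → ℝ} {f g h f' g' h' : ℝ → ℝ} {C : ℝ}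

theorem measurable_dualPotential (hc : Measurable c) (hf : Measurable f) (hg : Measurable g)
    (hh : Measurable h) : Measurable (dualPotential c f g h) := by
  unfold dualPotential
  fun_prop

theorem Df_eq (x : ℝ) :
    Df ν ρ c f g h x = ∫ q, Real.exp (-dualPotential c f g h (x, q)) ∂(ν.prod ρ) - 1 := by
  simp only [Df, dualPotential, neg_add, sub_eq_add_neg]

theorem Dg_eq (y : ℝ) :
    Dg μ ρ c f g h y = ∫ q, Real.exp (-dualPotential c f g h (q.1, y, q.2)) ∂(μ.prod ρ) - 1 := by
  simp only [Dg, dualPotential, neg_add, sub_eq_add_neg]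

theorem Dh_eq (x : ℝ) :
    Dh ν ρ c f g h x = ∫ q, (q.1 - x) * Real.exp (-dualPotential c f g h (x, q)) ∂(ν.prod ρ) := by
  simp only [Dh, dualPotential, neg_add, sub_eq_add_neg]

theorem integral_sq_dualPotential_sub [SFinite μ] [SFinite ν] [IsProbabilityMeasure ρ]
    (hf : Measurable f) (hg : Measurable g) (hh : Measurable h)
    (hf' : Measurable f') (hg' : Measurable g') (hh' : Measurable h') :
    ∫ p, (dualPotential c f' g' h' p - dualPotential c f g h p) ^ 2 ∂(μ.prod (ν.prod ρ))
      = ∫ p : ℝ × ℝ, (f' p.1 - f p.1 + (g' p.2 - g p.2)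
          + (h' p.1 - h p.1) * (p.2 - p.1)) ^ 2 ∂(μ.prod ν) := by
  rw [← (measurePreserving_prod_fst_snd_fst μ ν ρ).integral_comp_of_aestronglyMeasurable
    (Measurable.aestronglyMeasurable (by fun_prop))]
  congr 1 with p
  simp only [dualPotential]
  ring

variable (hU : Measurable (dualPotential c f g h)) (hU' : Measurable (dualPotential c f' g' h'))
  (hbd : ∀ᵐ p ∂(μ.prod (ν.prod ρ)), |dualPotential c f g h p| ≤ C)
  (hbd' : ∀ᵐ p ∂(μ.prod (ν.prod ρ)), |dualPotential c f' g' h' p| ≤ C)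
include hU hU' hbd hbd'

theorem integral_sq_Df_sub_Df_le [IsFiniteMeasure μ] [IsProbabilityMeasure ν]
    [IsProbabilityMeasure ρ] :
    ∫ x, (Df ν ρ c f' g' h' x - Df ν ρ c f g h x) ^ 2 ∂μ
      ≤ Real.exp C ^ 2
        * ∫ p, (dualPotential c f' g' h' p - dualPotential c f g h p) ^ 2 ∂(μ.prod (ν.prod ρ)) := by
  simpa only [Df_eq, one_mul, one_pow, mul_one, sub_sub_sub_cancel_right] using
    integral_sq_sub_integral_mul_exp_le (w := fun _ => 1) (W := 1) hU.aestronglyMeasurable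
      hU'.aestronglyMeasurable aestronglyMeasurable_const hbd hbd' (ae_of_all _ fun _ => by simp)

theorem integral_sq_Dg_sub_Dg_le [IsProbabilityMeasure μ] [IsFiniteMeasure ν]
    [IsProbabilityMeasure ρ] :
    ∫ y, (Dg μ ρ c f' g' h' y - Dg μ ρ c f g h y) ^ 2 ∂ν
      ≤ Real.exp C ^ 2
        * ∫ p, (dualPotential c f' g' h' p - dualPotential c f g h p) ^ 2 ∂(μ.prod (ν.prod ρ)) := by
  have hσ := measurePreserving_prod_left_comm μ ν ρ
  rw [← hσ.integral_comp_of_aestronglyMeasurable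
    (G := fun p => (dualPotential c f' g' h' p - dualPotential c f g h p) ^ 2)
    (Measurable.aestronglyMeasurable (by fun_prop))]
  simpa only [Dg_eq, Function.comp_apply, one_mul, one_pow, mul_one,
    sub_sub_sub_cancel_right] using
    integral_sq_sub_integral_mul_exp_le (w := fun _ => 1) (W := 1)
      (hU.comp hσ.measurable).aestronglyMeasurable (hU'.comp hσ.measurable).aestronglyMeasurable
      aestronglyMeasurable_const (hσ.quasiMeasurePreserving.ae hbd)
      (hσ.quasiMeasurePreserving.ae hbd') (ae_of_all _ fun _ => by simp)

theorem integral_sq_Dh_sub_Dh_le [IsFiniteMeasure μ] [IsProbabilityMeasure ν]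
    [IsProbabilityMeasure ρ] {A B : ℝ} (hA : ∀ᵐ x ∂μ, |x| ≤ A) (hB : ∀ᵐ y ∂ν, |y| ≤ B) :
    ∫ x, (Dh ν ρ c f' g' h' x - Dh ν ρ c f g h x) ^ 2 ∂μ
      ≤ Real.exp C ^ 2 * (A + B) ^ 2
        * ∫ p, (dualPotential c f' g' h' p - dualPotential c f g h p) ^ 2 ∂(μ.prod (ν.prod ρ)) := by
  have hw : ∀ᵐ p ∂(μ.prod (ν.prod ρ)), |p.2.1 - p.1| ≤ A + B := by
    filter_upwards [Measure.quasiMeasurePreserving_fst.ae hA,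
      (Measure.quasiMeasurePreserving_fst.comp Measure.quasiMeasurePreserving_snd).ae hB]
      with p hx hy
    exact (abs_sub _ _).trans (by simp only [Function.comp_apply] at hy; linarith)
  simpa only [Dh_eq] using
    integral_sq_sub_integral_mul_exp_le hU.aestronglyMeasurable hU'.aestronglyMeasurable
      (by fun_prop) hbd hbd' hw

end DualPotential

theorem stmt_10_general
    (μ ν ρ : Measure ℝ)
    [IsProbabilityMeasure μ] [IsProbabilityMeasure ν] [IsProbabilityMeasure ρ]
    (A B : ℝ) (hA : ∀ᵐ x ∂μ, |x| ≤ A) (hB : ∀ᵐ y ∂ν, |y| ≤ B)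
    (c : ℝ × ℝ × ℝ → ℝ) (hcm : Measurable c)
    (C0 : ℝ)
    (f g h f' g' h' : ℝ → ℝ)
    (hfm : Measurable f) (hgm : Measurable g) (hhm : Measurable h)
    (hfm' : Measurable f') (hgm' : Measurable g') (hhm' : Measurable h')
    (hbd : ∀ᵐ p ∂(μ.prod (ν.prod ρ)),
      |c p + f p.1 + g p.2.1 + h p.1 * (p.2.1 - p.1)| ≤ C0)
    (hbd' : ∀ᵐ p ∂(μ.prod (ν.prod ρ)),
      |c p + f' p.1 + g' p.2.1 + h' p.1 * (p.2.1 - p.1)| ≤ C0) :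
    (∫ x, (Df ν ρ c f' g' h' x - Df ν ρ c f g h x) ^ 2 ∂μ
        ≤ (Real.exp (-C0))⁻¹ ^ 2
          * ∫ p : ℝ × ℝ, (f' p.1 - f p.1 + (g' p.2 - g p.2)
              + (h' p.1 - h p.1) * (p.2 - p.1)) ^ 2 ∂(μ.prod ν)) ∧
    (∫ y, (Dg μ ρ c f' g' h' y - Dg μ ρ c f g h y) ^ 2 ∂ν
        ≤ (Real.exp (-C0))⁻¹ ^ 2
          * ∫ p : ℝ × ℝ, (f' p.1 - f p.1 + (g' p.2 - g p.2)
              + (h' p.1 - h p.1) * (p.2 - p.1)) ^ 2 ∂(μ.prod ν)) ∧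
    (∫ x, (Dh ν ρ c f' g' h' x - Dh ν ρ c f g h x) ^ 2 ∂μ
        ≤ (Real.exp (-C0))⁻¹ ^ 2 * (A + B) ^ 2
          * ∫ p : ℝ × ℝ, (f' p.1 - f p.1 + (g' p.2 - g p.2)
              + (h' p.1 - h p.1) * (p.2 - p.1)) ^ 2 ∂(μ.prod ν)) := by
  have hU := measurable_dualPotential hcm hfm hgm hhm
  have hU' := measurable_dualPotential hcm hfm' hgm' hhm'
  rw [Real.exp_neg, inv_inv, ← integral_sq_dualPotential_sub (ρ := ρ) hfm hgm hhm hfm' hgm' hhm']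
  exact ⟨integral_sq_Df_sub_Df_le hU hU' hbd hbd', integral_sq_Dg_sub_Dg_le hU hU' hbd hbd',
    integral_sq_Dh_sub_Dh_le hU hU' hbd hbd' hA hB⟩

theorem stmt_10
    (μ ν ρ : Measure ℝ)
    [IsProbabilityMeasure μ] [IsProbabilityMeasure ν] [IsProbabilityMeasure ρ]
    (A B : ℝ) (hA : ∀ᵐ x ∂μ, |x| ≤ A) (hB : ∀ᵐ y ∂ν, |y| ≤ B)
    (c : ℝ × ℝ × ℝ → ℝ) (hcm : Measurable c)
    (C0 : ℝ) (hC0 : 0 < C0)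
    (f g h f' g' h' : ℝ → ℝ)
    (hfm : Measurable f) (hgm : Measurable g) (hhm : Measurable h)
    (hfm' : Measurable f') (hgm' : Measurable g') (hhm' : Measurable h')
    (hbd : ∀ᵐ p ∂(μ.prod (ν.prod ρ)),
      |c p + f p.1 + g p.2.1 + h p.1 * (p.2.1 - p.1)| ≤ C0)
    (hbd' : ∀ᵐ p ∂(μ.prod (ν.prod ρ)),
      |c p + f' p.1 + g' p.2.1 + h' p.1 * (p.2.1 - p.1)| ≤ C0) :
    (∫ x, (Df ν ρ c f' g' h' x - Df ν ρ c f g h x) ^ 2 ∂μ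
        ≤ (Real.exp (-C0))⁻¹ ^ 2
          * ∫ p : ℝ × ℝ, (f' p.1 - f p.1 + (g' p.2 - g p.2)
              + (h' p.1 - h p.1) * (p.2 - p.1)) ^ 2 ∂(μ.prod ν)) ∧
    (∫ y, (Dg μ ρ c f' g' h' y - Dg μ ρ c f g h y) ^ 2 ∂ν
        ≤ (Real.exp (-C0))⁻¹ ^ 2
          * ∫ p : ℝ × ℝ, (f' p.1 - f p.1 + (g' p.2 - g p.2)
              + (h' p.1 - h p.1) * (p.2 - p.1)) ^ 2 ∂(μ.prod ν)) ∧
    (∫ x, (Dh ν ρ c f' g' h' x - Dh ν ρ c f g h x) ^ 2 ∂μ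
        ≤ (Real.exp (-C0))⁻¹ ^ 2 * (A + B) ^ 2
          * ∫ p : ℝ × ℝ, (f' p.1 - f p.1 + (g' p.2 - g p.2)
              + (h' p.1 - h p.1) * (p.2 - p.1)) ^ 2 ∂(μ.prod ν)) :=
  stmt_10_general μ ν ρ A B hA hB c hcm C0 f g h f' g' h' hfm hgm hhm hfm' hgm' hhm' hbd hbd'
end

section
/- Let μ, ν be compactly supported Borel probability measures on ℝ with ∫ y dν(y) = 0, let |X| denote the essential supremum of |x| under μ, and let Var(ν) = ∫ y² dν(y) > 0. Let f, h ∈ L²(μ) and g ∈ L²(ν) satisfy the normalizations ∫ g dν = 0 and ∫ h dμ = 0. Then the exact identity holds: ∫∫ |f(x)+g(y)+h(x)(y−x)|² d(μ⊗ν)(x,y) = ∫ |f(x)−h(x)·x|² dμ(x) + ∫ |g(y)|² dν(y) + Var(ν)·∫ |h(x)|² dμ(x). Consequently, with δ = (Var(ν)/(2|X|²) + 1)^{−1}, one has ∫∫ |f(x)+g(y)+h(x)(y−x)|² d(μ⊗ν) ≥ (1−δ)·∫ f² dμ + ∫ g² dν + (Var(ν)/2)·∫ h² dμ. -/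
/-!
Write `F x = f x - h x * x`, so that the integrand is `(F x + g y + h x * y) ^ 2`. The three
summands are pairwise orthogonal in `L²(μ ⊗ ν)`: each cross term factors as a product of a
`μ`-integral and a `ν`-integral, one of which is `∫ g dν`, `∫ y dν` or `∫ h dμ`, all zero. Pythagoras
gives the identity. For the lower bound, with `δ = 1 - (V / (2 A²) + 1)⁻¹ = V / (V + 2 A²)`, the
weighted AM-GM inequality `2 V F h x ≤ 2 A² F² + V² h² x² / (2 A²)` together with `x² ≤ A²` gives
`δ (F + h x)² ≤ F² + V h² / 2` pointwise.
-/

open MeasureTheory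

section Pythagoras

variable {α : Type*} [MeasurableSpace α] {ρ : Measure α} {a b c : α → ℝ}

theorem integral_add_sq_of_integral_mul_eq_zero (ha : MemLp a 2 ρ) (hb : MemLp b 2 ρ)
    (hab : ∫ x, a x * b x ∂ρ = 0) :
    ∫ x, (a x + b x) ^ 2 ∂ρ = ∫ x, a x ^ 2 ∂ρ + ∫ x, b x ^ 2 ∂ρ := by
  have hab' : Integrable (fun x => 2 * (a x * b x)) ρ := (ha.integrable_mul hb).const_mul 2
  have hab'b : Integrable (fun x => 2 * (a x * b x) + b x ^ 2) ρ := hab'.add hb.integrable_sq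
  calc ∫ x, (a x + b x) ^ 2 ∂ρ = ∫ x, a x ^ 2 + (2 * (a x * b x) + b x ^ 2) ∂ρ := by
        congr 1; ext x; ring
    _ = ∫ x, a x ^ 2 ∂ρ + ∫ x, b x ^ 2 ∂ρ := by
        rw [integral_add ha.integrable_sq hab'b, integral_add hab' hb.integrable_sq,
          integral_const_mul, hab, mul_zero, zero_add]

theorem integral_add_add_sq_of_integral_mul_eq_zero (ha : MemLp a 2 ρ) (hb : MemLp b 2 ρ)
    (hc : MemLp c 2 ρ) (hab : ∫ x, a x * b x ∂ρ = 0) (hac : ∫ x, a x * c x ∂ρ = 0)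
    (hbc : ∫ x, b x * c x ∂ρ = 0) :
    ∫ x, (a x + b x + c x) ^ 2 ∂ρ = ∫ x, a x ^ 2 ∂ρ + ∫ x, b x ^ 2 ∂ρ + ∫ x, c x ^ 2 ∂ρ := by
  have hac' : Integrable (fun x => a x * c x) ρ := ha.integrable_mul hc
  have hbc' : Integrable (fun x => b x * c x) ρ := hb.integrable_mul hc
  have habc : ∫ x, (a x + b x) * c x ∂ρ = 0 := by
    simp_rw [add_mul]
    rw [integral_add hac' hbc', hac, hbc, add_zero]
  rw [integral_add_sq_of_integral_mul_eq_zero (a := fun x => a x + b x) (ha.add hb) hc habc,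
    integral_add_sq_of_integral_mul_eq_zero ha hb hab]

end Pythagoras

section Product

variable {α β : Type*} [MeasurableSpace α] [MeasurableSpace β] {μ : Measure α} {ν : Measure β}

theorem MeasureTheory.MemLp.mul_prod_two [SFinite ν] {h : α → ℝ} {k : β → ℝ} (hh : MemLp h 2 μ)
    (hk : MemLp k 2 ν) : MemLp (fun p : α × β => h p.1 * k p.2) 2 (μ.prod ν) := by
  refine (memLp_two_iff_integrable_sq (hh.1.comp_fst.mul hk.1.comp_snd)).2 ?_
  simpa only [Pi.mul_apply, mul_pow] using hh.integrable_sq.mul_prod hk.integrable_sq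

theorem integral_prod_sq_add_add_mul [IsProbabilityMeasure μ] [IsProbabilityMeasure ν]
    {F h : α → ℝ} {g k : β → ℝ} (hF : MemLp F 2 μ) (hg : MemLp g 2 ν) (hh : MemLp h 2 μ)
    (hk : MemLp k 2 ν) (hg0 : ∫ y, g y ∂ν = 0) (hk0 : ∫ y, k y ∂ν = 0)
    (hh0 : ∫ x, h x ∂μ = 0) :
    ∫ p : α × β, (F p.1 + g p.2 + h p.1 * k p.2) ^ 2 ∂(μ.prod ν)
      = ∫ x, F x ^ 2 ∂μ + ∫ y, g y ^ 2 ∂ν + (∫ y, k y ^ 2 ∂ν) * ∫ x, h x ^ 2 ∂μ := by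
  rw [integral_add_add_sq_of_integral_mul_eq_zero (hF.comp_fst ν) (hg.comp_snd μ)
    (hh.mul_prod_two hk)]
  · simp_rw [mul_pow]
    rw [integral_fun_fst (fun x => F x ^ 2), integral_fun_snd (fun y => g y ^ 2),
      integral_prod_mul (fun x => h x ^ 2) (fun y => k y ^ 2)]
    simp [mul_comm]
  · rw [integral_prod_mul F g, hg0, mul_zero]
  · simp_rw [← mul_assoc]
    rw [integral_prod_mul (fun x => F x * h x) k, hk0, mul_zero]
  · simp_rw [mul_left_comm (g _)]
    rw [integral_prod_mul h (fun y => g y * k y), hh0, zero_mul]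

end Product

theorem MeasureTheory.MemLp.mul_id_of_ae_abs_le {p : ENNReal} {μ : Measure ℝ} {h : ℝ → ℝ} {A : ℝ}
    (hh : MemLp h p μ) (hA : ∀ᵐ x ∂μ, |x| ≤ A) : MemLp (fun x => h x * x) p μ := by
  refine hh.of_le_mul (c := A) (hh.1.mul aestronglyMeasurable_id) ?_
  filter_upwards [hA] with x hx
  rw [norm_mul, Real.norm_eq_abs, Real.norm_eq_abs, mul_comm A]
  exact mul_le_mul_of_nonneg_left hx (abs_nonneg _)

theorem one_sub_inv_mul_sq_le {V A x a b : ℝ} (hV : 0 ≤ V) (hx : |x| ≤ A) :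
    (1 - (V / (2 * A ^ 2) + 1)⁻¹) * a ^ 2 ≤ (a - b * x) ^ 2 + V / 2 * b ^ 2 := by
  rcases ((abs_nonneg x).trans hx).eq_or_lt with rfl | hA
  · rw [zero_pow two_ne_zero, mul_zero, div_zero, zero_add, inv_one, sub_self, zero_mul]
    positivity
  have hx2 : x ^ 2 ≤ A ^ 2 := sq_le_sq' (abs_le.1 hx).1 (abs_le.1 hx).2
  have hδ : 1 - (V / (2 * A ^ 2) + 1)⁻¹ = V / (V + 2 * A ^ 2) := by
    field_simp
    ring
  have h2A : 0 < 2 * A ^ 2 := by positivity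
  rw [hδ, div_mul_eq_mul_div, div_le_iff₀ (by positivity)]
  refine le_of_mul_le_mul_left ?_ h2A
  nlinarith [sq_nonneg (2 * A ^ 2 * (a - b * x) - V * b * x),
    mul_nonneg (mul_nonneg hV hV) (mul_nonneg (sq_nonneg b) (sub_nonneg.2 hx2)),
    mul_nonneg (mul_nonneg hV h2A.le) (mul_nonneg (sq_nonneg b) (sub_nonneg.2 hx2))]

theorem one_sub_inv_mul_integral_sq_le {μ : Measure ℝ} {f h : ℝ → ℝ} {V A : ℝ} (hV : 0 ≤ V)
    (hA : ∀ᵐ x ∂μ, |x| ≤ A) (hf : MemLp f 2 μ) (hh : MemLp h 2 μ) :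
    (1 - (V / (2 * A ^ 2) + 1)⁻¹) * ∫ x, f x ^ 2 ∂μ
      ≤ ∫ x, (f x - h x * x) ^ 2 ∂μ + V / 2 * ∫ x, h x ^ 2 ∂μ := by
  have hF : MemLp (fun x => f x - h x * x) 2 μ := hf.sub (hh.mul_id_of_ae_abs_le hA)
  rw [← integral_const_mul, ← integral_const_mul,
    ← integral_add hF.integrable_sq (hh.integrable_sq.const_mul _)]
  refine integral_mono_ae (hf.integrable_sq.const_mul _)
    (hF.integrable_sq.add (hh.integrable_sq.const_mul _)) ?_
  filter_upwards [hA] with x hx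
  exact one_sub_inv_mul_sq_le hV hx

theorem stmt_12_general
    (μ ν : Measure ℝ) [IsProbabilityMeasure μ] [IsProbabilityMeasure ν]
    (A B : ℝ) (hA : ∀ᵐ x ∂μ, |x| ≤ A) (hB : ∀ᵐ y ∂ν, |y| ≤ B)
    (hν0 : ∫ y, y ∂ν = 0)
    (f g h : ℝ → ℝ)
    (hf : MemLp f 2 μ) (hg : MemLp g 2 ν) (hh : MemLp h 2 μ)
    (hgn : ∫ y, g y ∂ν = 0) (hhn : ∫ x, h x ∂μ = 0) :
    (∫ p : ℝ × ℝ, (f p.1 + g p.2 + h p.1 * (p.2 - p.1)) ^ 2 ∂(μ.prod ν)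
      = (∫ x, (f x - h x * x) ^ 2 ∂μ) + (∫ y, (g y) ^ 2 ∂ν)
        + (∫ y, y ^ 2 ∂ν) * ∫ x, (h x) ^ 2 ∂μ) ∧
    (∫ p : ℝ × ℝ, (f p.1 + g p.2 + h p.1 * (p.2 - p.1)) ^ 2 ∂(μ.prod ν)
      ≥ (1 - ((∫ y, y ^ 2 ∂ν) / (2 * A ^ 2) + 1)⁻¹) * (∫ x, (f x) ^ 2 ∂μ)
        + (∫ y, (g y) ^ 2 ∂ν) + ((∫ y, y ^ 2 ∂ν) / 2) * ∫ x, (h x) ^ 2 ∂μ) := by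
  have hy : MemLp (fun y : ℝ => y) 2 ν := .of_bound aestronglyMeasurable_id B (by simpa using hB)
  have hident : ∫ p : ℝ × ℝ, (f p.1 + g p.2 + h p.1 * (p.2 - p.1)) ^ 2 ∂(μ.prod ν)
      = (∫ x, (f x - h x * x) ^ 2 ∂μ) + (∫ y, (g y) ^ 2 ∂ν)
        + (∫ y, y ^ 2 ∂ν) * ∫ x, (h x) ^ 2 ∂μ := by
    have hsplit : ∀ p : ℝ × ℝ, f p.1 + g p.2 + h p.1 * (p.2 - p.1)
        = (f p.1 - h p.1 * p.1) + g p.2 + h p.1 * p.2 := fun p => by ring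
    simp_rw [hsplit]
    exact integral_prod_sq_add_add_mul (hf.sub (hh.mul_id_of_ae_abs_le hA)) hg hh hy hgn hν0 hhn
  refine ⟨hident, ?_⟩
  have hV : 0 ≤ ∫ y, y ^ 2 ∂ν := integral_nonneg fun y => sq_nonneg y
  have hhalf : 0 ≤ (∫ y, y ^ 2 ∂ν) / 2 * ∫ x, h x ^ 2 ∂μ :=
    mul_nonneg (by positivity) (integral_nonneg fun x => sq_nonneg _)
  have hlow := one_sub_inv_mul_integral_sq_le hV hA hf hh
  rw [hident]
  linarith

theorem stmt_12
    (μ ν : Measure ℝ) [IsProbabilityMeasure μ] [IsProbabilityMeasure ν]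
    (A B : ℝ) (hA : ∀ᵐ x ∂μ, |x| ≤ A) (hB : ∀ᵐ y ∂ν, |y| ≤ B)
    (hν0 : ∫ y, y ∂ν = 0) (hVar : 0 < ∫ y, y ^ 2 ∂ν)
    (f g h : ℝ → ℝ)
    (hf : MemLp f 2 μ) (hg : MemLp g 2 ν) (hh : MemLp h 2 μ)
    (hgn : ∫ y, g y ∂ν = 0) (hhn : ∫ x, h x ∂μ = 0) :
    (∫ p : ℝ × ℝ, (f p.1 + g p.2 + h p.1 * (p.2 - p.1)) ^ 2 ∂(μ.prod ν)
      = (∫ x, (f x - h x * x) ^ 2 ∂μ) + (∫ y, (g y) ^ 2 ∂ν)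
        + (∫ y, y ^ 2 ∂ν) * ∫ x, (h x) ^ 2 ∂μ) ∧
    (∫ p : ℝ × ℝ, (f p.1 + g p.2 + h p.1 * (p.2 - p.1)) ^ 2 ∂(μ.prod ν)
      ≥ (1 - ((∫ y, y ^ 2 ∂ν) / (2 * A ^ 2) + 1)⁻¹) * (∫ x, (f x) ^ 2 ∂μ)
        + (∫ y, (g y) ^ 2 ∂ν) + ((∫ y, y ^ 2 ∂ν) / 2) * ∫ x, (h x) ^ 2 ∂μ) :=
  stmt_12_general μ ν A B hA hB hν0 f g h hf hg hh hgn hhn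
end

section
/- Let ν, ρ be Borel probability measures on ℝ with ν compactly supported, not a Dirac mass, and ∫ y dν = 0; write Var(ν) = ∫ y² dν > 0 and let |Y| be the essential supremum of |y| under ν. Let c : ℝ³ → ℝ be continuously differentiable with |∇c| ≤ L_c and |c| ≤ C_c, and let g : ℝ → ℝ be bounded measurable with |g| ≤ C_g. Let I ⊆ [−A, A] be an open interval and h : I → ℝ a differentiable function with |h| ≤ C_h on I such that for every x ∈ I, ∫ (y−x)·exp(−c(x,y,z)−g(y)−h(x)·(y−x)) d(ν⊗ρ)(y,z) = 0. Then for every x ∈ I: |h′(x)| ≤ (1 + L_c·(A+|Y|)) · exp(2·(C_c + C_g + C_h·|Y|)) / Var(ν). -/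
open MeasureTheory Filter Set

/-!
Write `w(x, t) = exp (-c - g - t (y - x))` and `F(x, t) = ∫ (y - x) w(x, t)`, so that the
hypothesis reads `F(x, h x) = 0` on `I`. As `y` is bounded, `F` may be differentiated under the
integral sign, and the chain rule along `x ↦ (x, h x)` gives
`h' · ∫ (y - x)² w = -∫ (1 + (y - x) ∂ₓc) w`, the term `h · F` having dropped out.
Since `w = e^{t x} · exp (-c - g - t y)` and `|c + g + t y| ≤ Cc + Cg + Ch |Y|`, the weight lies
within the factors `e^{± (Cc + Cg + Ch |Y|)}` of `e^{t x}`. This bounds the right-hand side by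
`(1 + Lc (A + |Y|)) e^{Cc + Cg + Ch |Y|} e^{t x}`, and the integral on the left from below by
`e^{-(Cc + Cg + Ch |Y|)} e^{t x} ∫ (y - x)² dν ≥ e^{-(Cc + Cg + Ch |Y|)} e^{t x} Var(ν)`.
-/

section

variable (c : ℝ × ℝ × ℝ → ℝ) (g : ℝ → ℝ)

noncomputable def tiltWeight (x t : ℝ) (q : ℝ × ℝ) : ℝ :=
  Real.exp (-c (x, q.1, q.2) - g q.1 - t * (q.1 - x))

noncomputable def partialFst (x : ℝ) (q : ℝ × ℝ) : ℝ :=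
  fderiv ℝ c (x, q.1, q.2) (1, 0, 0)

/-- Written so that the first summand is `t` times the integrand of the first-order condition. -/
noncomputable def tiltMomentDerivX (p q : ℝ × ℝ) : ℝ :=
  p.2 * ((q.1 - p.1) * tiltWeight c g p.1 p.2 q) -
    (1 + (q.1 - p.1) * partialFst c p.1 q) * tiltWeight c g p.1 p.2 q

noncomputable def tiltMomentDerivT (p q : ℝ × ℝ) : ℝ :=
  -((q.1 - p.1) ^ 2 * tiltWeight c g p.1 p.2 q)

noncomputable def tiltMomentFDeriv (p q : ℝ × ℝ) : ℝ × ℝ →L[ℝ] ℝ :=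
  tiltMomentDerivX c g p q • ContinuousLinearMap.fst ℝ ℝ ℝ +
    tiltMomentDerivT c g p q • ContinuousLinearMap.snd ℝ ℝ ℝ

variable {c g}

theorem hasFDerivAt_tiltMoment {p q : ℝ × ℝ} (hc : DifferentiableAt ℝ c (p.1, q.1, q.2)) :
    HasFDerivAt (fun p : ℝ × ℝ => (q.1 - p.1) * tiltWeight c g p.1 p.2 q)
      (tiltMomentFDeriv c g p q) p := by
  have hin : HasFDerivAt (fun p : ℝ × ℝ => ((p.1, q.1, q.2) : ℝ × ℝ × ℝ))
      ((ContinuousLinearMap.fst ℝ ℝ ℝ).prod 0) p :=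
    hasFDerivAt_fst.prodMk (hasFDerivAt_const _ _)
  have hsub : HasFDerivAt (fun p : ℝ × ℝ => q.1 - p.1) (0 - ContinuousLinearMap.fst ℝ ℝ ℝ) p :=
    (hasFDerivAt_const _ _).sub hasFDerivAt_fst
  have hexp := (((hc.hasFDerivAt.comp p hin).neg.sub_const (g q.1)).sub
    (hasFDerivAt_snd.mul hsub)).exp
  refine (hsub.mul hexp).congr_fderiv ?_
  refine ContinuousLinearMap.prod_ext (ContinuousLinearMap.ext_ring ?_)
    (ContinuousLinearMap.ext_ring ?_) <;>
  simp [tiltMomentFDeriv, tiltMomentDerivX, tiltMomentDerivT, tiltWeight, partialFst,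
    Prod.mk_zero_zero] <;> ring

theorem tiltWeight_pos (x t : ℝ) (q : ℝ × ℝ) : 0 < tiltWeight c g x t q :=
  Real.exp_pos _

theorem abs_log_tiltWeight_sub_le {Cc Cg : ℝ} (hcb : ∀ p, |c p| ≤ Cc) (hgb : ∀ y, |g y| ≤ Cg)
    (x t : ℝ) (q : ℝ × ℝ) :
    |Real.log (tiltWeight c g x t q) - t * x| ≤ Cc + Cg + |t| * |q.1| := by
  rw [tiltWeight, Real.log_exp]
  calc |(-c (x, q.1, q.2) - g q.1 - t * (q.1 - x)) - t * x|
      = |-c (x, q.1, q.2) + -g q.1 + -(t * q.1)| := by ring_nf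
    _ ≤ |c (x, q.1, q.2)| + |g q.1| + |t * q.1| := by
      simpa only [abs_neg] using abs_add_three (-c (x, q.1, q.2)) (-g q.1) (-(t * q.1))
    _ ≤ Cc + Cg + |t| * |q.1| := by rw [abs_mul]; gcongr <;> simp [hcb, hgb]

theorem tiltWeight_le_of_abs_le {Cc Cg B T x t : ℝ} {q : ℝ × ℝ} (hcb : ∀ p, |c p| ≤ Cc)
    (hgb : ∀ y, |g y| ≤ Cg) (hq : |q.1| ≤ B) (ht : |t| ≤ T) :
    tiltWeight c g x t q ≤ Real.exp (Cc + Cg + T * B + t * x) := by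
  have := mul_le_mul ht hq (abs_nonneg _) ((abs_nonneg _).trans ht)
  rw [← Real.exp_log (tiltWeight_pos x t q)]
  exact Real.exp_le_exp.2 <| by linarith [(abs_le.1 (abs_log_tiltWeight_sub_le hcb hgb x t q)).2]

theorem exp_le_tiltWeight_of_abs_le {Cc Cg B T x t : ℝ} {q : ℝ × ℝ} (hcb : ∀ p, |c p| ≤ Cc)
    (hgb : ∀ y, |g y| ≤ Cg) (hq : |q.1| ≤ B) (ht : |t| ≤ T) :
    Real.exp (-(Cc + Cg + T * B) + t * x) ≤ tiltWeight c g x t q := by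
  have := mul_le_mul ht hq (abs_nonneg _) ((abs_nonneg _).trans ht)
  rw [← Real.exp_log (tiltWeight_pos x t q)]
  exact Real.exp_le_exp.2 <| by linarith [(abs_le.1 (abs_log_tiltWeight_sub_le hcb hgb x t q)).1]

theorem measurable_tiltWeight (hc : Continuous c) (hg : Measurable g) (x t : ℝ) :
    Measurable (tiltWeight c g x t) :=
  (((hc.measurable.comp (measurable_const.prodMk measurable_id)).neg.sub
    (hg.comp measurable_fst)).sub (measurable_const.mul (measurable_fst.sub measurable_const))).exp

theorem continuous_partialFst (hc : ContDiff ℝ 1 c) (x : ℝ) : Continuous (partialFst c x) :=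
  ((hc.continuous_fderiv one_ne_zero).comp (continuous_const.prodMk continuous_id)).clm_apply
    continuous_const

theorem abs_partialFst_le {Lc : ℝ} (hcg : ∀ p, ‖fderiv ℝ c p‖ ≤ Lc) (x : ℝ) (q : ℝ × ℝ) :
    |partialFst c x q| ≤ Lc := by
  have h := (fderiv ℝ c (x, q.1, q.2)).le_opNorm (1, 0, 0)
  simp only [Prod.norm_def, norm_one, norm_zero, max_self, max_eq_left zero_le_one,
    mul_one, Real.norm_eq_abs] at h
  exact h.trans (hcg _)

theorem norm_smul_fst_add_smul_snd_le (a b : ℝ) :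
    ‖a • ContinuousLinearMap.fst ℝ ℝ ℝ + b • ContinuousLinearMap.snd ℝ ℝ ℝ‖ ≤ |a| + |b| := by
  calc _ ≤ ‖a‖ * ‖ContinuousLinearMap.fst ℝ ℝ ℝ‖ + ‖b‖ * ‖ContinuousLinearMap.snd ℝ ℝ ℝ‖ :=
        (norm_add_le _ _).trans (add_le_add (norm_smul_le _ _) (norm_smul_le _ _))
    _ ≤ ‖a‖ * 1 + ‖b‖ * 1 := by
      gcongr
      exacts [ContinuousLinearMap.norm_fst_le ℝ ℝ ℝ, ContinuousLinearMap.norm_snd_le ℝ ℝ ℝ]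
    _ = |a| + |b| := by simp

theorem abs_one_add_mul_partialFst_le {Lc R x : ℝ} {q : ℝ × ℝ} (hcg : ∀ p, ‖fderiv ℝ c p‖ ≤ Lc)
    (hq : |q.1 - x| ≤ R) : |1 + (q.1 - x) * partialFst c x q| ≤ 1 + Lc * R := by
  have := mul_le_mul hq (abs_partialFst_le hcg x q) (abs_nonneg _) ((abs_nonneg _).trans hq)
  have := abs_add_le 1 ((q.1 - x) * partialFst c x q)
  rw [abs_one, abs_mul] at this
  linarith

theorem norm_tiltMomentFDeriv_le {Lc Cc Cg B X T : ℝ} (hcg : ∀ p, ‖fderiv ℝ c p‖ ≤ Lc)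
    (hcb : ∀ p, |c p| ≤ Cc) (hgb : ∀ y, |g y| ≤ Cg) {p q : ℝ × ℝ}
    (hq : |q.1| ≤ B) (hx : |p.1| ≤ X) (ht : |p.2| ≤ T) :
    ‖tiltMomentFDeriv c g p q‖ ≤
      (T * (X + B) + (1 + Lc * (X + B)) + (X + B) ^ 2) * Real.exp (Cc + Cg + T * B + T * X) := by
  set w := tiltWeight c g p.1 p.2 q
  have hw : 0 ≤ w := (tiltWeight_pos _ _ q).le
  have hT : 0 ≤ T := (abs_nonneg _).trans ht
  have hd : |q.1 - p.1| ≤ X + B :=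
    (abs_sub_comm _ _).trans_le ((abs_sub _ _).trans (add_le_add hx hq))
  have hdc := abs_one_add_mul_partialFst_le hcg hd
  have hwE : w ≤ Real.exp (Cc + Cg + T * B + T * X) := by
    refine (tiltWeight_le_of_abs_le hcb hgb hq ht).trans (Real.exp_le_exp.2 ?_)
    have := (le_abs_self _).trans (abs_mul p.2 p.1 ▸ mul_le_mul ht hx (abs_nonneg _) hT)
    linarith
  have hX : |tiltMomentDerivX c g p q| ≤ (T * (X + B) + (1 + Lc * (X + B))) * w := by
    refine (abs_sub _ _).trans ?_
    rw [abs_mul, abs_mul, abs_mul, abs_of_nonneg hw, add_mul, ← mul_assoc]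
    gcongr
  have hT' : |tiltMomentDerivT c g p q| ≤ (X + B) ^ 2 * w := by
    rw [tiltMomentDerivT, abs_neg, abs_mul, abs_of_nonneg hw, abs_pow]
    gcongr
  calc ‖tiltMomentFDeriv c g p q‖
      ≤ |tiltMomentDerivX c g p q| + |tiltMomentDerivT c g p q| :=
        norm_smul_fst_add_smul_snd_le _ _
    _ ≤ (T * (X + B) + (1 + Lc * (X + B)) + (X + B) ^ 2) * w := by linarith
    _ ≤ _ := mul_le_mul_of_nonneg_left hwE (add_nonneg (add_nonneg
        (mul_nonneg hT ((abs_nonneg _).trans hd)) ((abs_nonneg _).trans hdc)) (sq_nonneg _))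

end

section

variable {μ : Measure (ℝ × ℝ)} {B : ℝ}

theorem ae_abs_sub_le (hB : ∀ᵐ q ∂μ, |q.1| ≤ B) (x : ℝ) : ∀ᵐ q ∂μ, |q.1 - x| ≤ |x| + B := by
  filter_upwards [hB] with q hq
  linarith [abs_sub q.1 x]

theorem integrable_mul_tiltWeight [IsFiniteMeasure μ] {Cc Cg M : ℝ} (hB : ∀ᵐ q ∂μ, |q.1| ≤ B)
    (hc : Continuous c) (hcb : ∀ p, |c p| ≤ Cc) (hgm : Measurable g) (hgb : ∀ y, |g y| ≤ Cg)
    {f : ℝ × ℝ → ℝ} (hf : AEStronglyMeasurable f μ) (hfM : ∀ᵐ q ∂μ, |f q| ≤ M) (x t : ℝ) :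
    Integrable (fun q => f q * tiltWeight c g x t q) μ := by
  refine .of_bound (hf.mul (measurable_tiltWeight hc hgm x t).aestronglyMeasurable)
    (M * Real.exp (Cc + Cg + |t| * B + t * x)) ?_
  filter_upwards [hB, hfM] with q hq hfq
  rw [Real.norm_eq_abs, abs_mul, abs_of_pos (tiltWeight_pos x t q)]
  exact mul_le_mul hfq (tiltWeight_le_of_abs_le hcb hgb hq le_rfl) (tiltWeight_pos x t q).le
    ((abs_nonneg _).trans hfq)

theorem integrable_sub_mul_tiltWeight [IsFiniteMeasure μ] {Cc Cg : ℝ}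
    (hB : ∀ᵐ q ∂μ, |q.1| ≤ B) (hc : Continuous c) (hcb : ∀ p, |c p| ≤ Cc)
    (hgm : Measurable g) (hgb : ∀ y, |g y| ≤ Cg) (x t : ℝ) :
    Integrable (fun q => (q.1 - x) * tiltWeight c g x t q) μ :=
  integrable_mul_tiltWeight hB hc hcb hgm hgb (by fun_prop) (ae_abs_sub_le hB x) x t

theorem integrable_sub_sq_mul_tiltWeight [IsFiniteMeasure μ] {Cc Cg : ℝ}
    (hB : ∀ᵐ q ∂μ, |q.1| ≤ B) (hc : Continuous c) (hcb : ∀ p, |c p| ≤ Cc)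
    (hgm : Measurable g) (hgb : ∀ y, |g y| ≤ Cg) (x t : ℝ) :
    Integrable (fun q => (q.1 - x) ^ 2 * tiltWeight c g x t q) μ := by
  refine integrable_mul_tiltWeight hB hc hcb hgm hgb (by fun_prop) (M := (|x| + B) ^ 2) ?_ x t
  filter_upwards [ae_abs_sub_le hB x] with q hq
  rw [abs_pow]
  gcongr

theorem integrable_one_add_mul_partialFst_mul_tiltWeight [IsFiniteMeasure μ] {Lc Cc Cg : ℝ}
    (hB : ∀ᵐ q ∂μ, |q.1| ≤ B) (hc : ContDiff ℝ 1 c) (hcg : ∀ p, ‖fderiv ℝ c p‖ ≤ Lc)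
    (hcb : ∀ p, |c p| ≤ Cc) (hgm : Measurable g) (hgb : ∀ y, |g y| ≤ Cg) (x t : ℝ) :
    Integrable (fun q => (1 + (q.1 - x) * partialFst c x q) * tiltWeight c g x t q) μ :=
  integrable_mul_tiltWeight hB hc.continuous hcb hgm hgb
    (continuous_const.add ((continuous_fst.sub continuous_const).mul
      (continuous_partialFst hc x))).aestronglyMeasurable
    ((ae_abs_sub_le hB x).mono fun _ hq => abs_one_add_mul_partialFst_le hcg hq) x t

theorem hasFDerivAt_integral_tiltMoment [IsFiniteMeasure μ] {Lc Cc Cg : ℝ}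
    (hB : ∀ᵐ q ∂μ, |q.1| ≤ B) (hc : ContDiff ℝ 1 c) (hcg : ∀ p, ‖fderiv ℝ c p‖ ≤ Lc)
    (hcb : ∀ p, |c p| ≤ Cc) (hgm : Measurable g) (hgb : ∀ y, |g y| ≤ Cg) (p₀ : ℝ × ℝ) :
    HasFDerivAt (fun p : ℝ × ℝ => ∫ q, (q.1 - p.1) * tiltWeight c g p.1 p.2 q ∂μ)
      ((∫ q, tiltMomentDerivX c g p₀ q ∂μ) • ContinuousLinearMap.fst ℝ ℝ ℝ +
        (∫ q, tiltMomentDerivT c g p₀ q ∂μ) • ContinuousLinearMap.snd ℝ ℝ ℝ) p₀ := by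
  have hX : Integrable (tiltMomentDerivX c g p₀) μ :=
    ((integrable_sub_mul_tiltWeight hB hc.continuous hcb hgm hgb _ _).const_mul p₀.2).sub
      (integrable_one_add_mul_partialFst_mul_tiltWeight hB hc hcg hcb hgm hgb _ _)
  have hT : Integrable (tiltMomentDerivT c g p₀) μ :=
    (integrable_sub_sq_mul_tiltWeight hB hc.continuous hcb hgm hgb _ _).neg
  have hF' : Integrable (tiltMomentFDeriv c g p₀) μ :=
    (hX.smul_const (ContinuousLinearMap.fst ℝ ℝ ℝ)).add (hT.smul_const _)
  have hball : ∀ p ∈ Metric.ball p₀ 1, |p.1| ≤ |p₀.1| + 1 ∧ |p.2| ≤ |p₀.2| + 1 := by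
    intro p hp
    rw [Metric.mem_ball, Prod.dist_eq, max_lt_iff, Real.dist_eq, Real.dist_eq] at hp
    constructor <;> linarith [abs_sub_abs_le_abs_sub p.1 p₀.1, abs_sub_abs_le_abs_sub p.2 p₀.2]
  have hmeas (p : ℝ × ℝ) :
      AEStronglyMeasurable (fun q => (q.1 - p.1) * tiltWeight c g p.1 p.2 q) μ :=
    ((measurable_fst.sub measurable_const).mul
      (measurable_tiltWeight hc.continuous hgm p.1 p.2)).aestronglyMeasurable
  have hderiv := hasFDerivAt_integral_of_dominated_of_fderiv_le
    (Metric.ball_mem_nhds p₀ one_pos) (Eventually.of_forall hmeas)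
    (integrable_sub_mul_tiltWeight hB hc.continuous hcb hgm hgb _ _)
    hF'.aestronglyMeasurable
    (hB.mono fun q hq p hp => norm_tiltMomentFDeriv_le hcg hcb hgb hq (hball p hp).1 (hball p hp).2)
    (integrable_const _)
    (ae_of_all _ fun q p _ => hasFDerivAt_tiltMoment (hc.differentiable one_ne_zero _))
  simp only [tiltMomentFDeriv] at hderiv
  rwa [integral_add (hX.smul_const _) (hT.smul_const _), integral_smul_const,
    integral_smul_const] at hderiv

theorem deriv_mul_integral_sub_sq_mul_tiltWeight [IsFiniteMeasure μ] {Lc Cc Cg : ℝ}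
    (hB : ∀ᵐ q ∂μ, |q.1| ≤ B) (hc : ContDiff ℝ 1 c) (hcg : ∀ p, ‖fderiv ℝ c p‖ ≤ Lc)
    (hcb : ∀ p, |c p| ≤ Cc) (hgm : Measurable g) (hgb : ∀ y, |g y| ≤ Cg) {h : ℝ → ℝ} {x : ℝ}
    (hh : DifferentiableAt ℝ h x)
    (hfoc : ∀ᶠ x' in nhds x, ∫ q, (q.1 - x') * tiltWeight c g x' (h x') q ∂μ = 0) :
    deriv h x * ∫ q, (q.1 - x) ^ 2 * tiltWeight c g x (h x) q ∂μ =
      -∫ q, (1 + (q.1 - x) * partialFst c x q) * tiltWeight c g x (h x) q ∂μ := by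
  have hderiv := (hasFDerivAt_integral_tiltMoment hB hc hcg hcb hgm hgb (x, h x)).comp_hasDerivAt x
    ((hasDerivAt_id x).prodMk hh.hasDerivAt)
  have hzero := (hderiv.congr_of_eventuallyEq (hfoc.mono fun _ hx' => hx'.symm)).unique
    (hasDerivAt_const x 0)
  have hX : ∫ q, tiltMomentDerivX c g (x, h x) q ∂μ =
      h x * 0 - ∫ q, (1 + (q.1 - x) * partialFst c x q) * tiltWeight c g x (h x) q ∂μ := by
    rw [← hfoc.self_of_nhds, ← integral_const_mul, ← integral_sub
      ((integrable_sub_mul_tiltWeight hB hc.continuous hcb hgm hgb _ _).const_mul _)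
      (integrable_one_add_mul_partialFst_mul_tiltWeight hB hc hcg hcb hgm hgb _ _)]
    rfl
  have hT : ∫ q, tiltMomentDerivT c g (x, h x) q ∂μ =
      -∫ q, (q.1 - x) ^ 2 * tiltWeight c g x (h x) q ∂μ :=
    integral_neg _
  simp only [add_apply, smul_apply, ContinuousLinearMap.coe_fst', ContinuousLinearMap.coe_snd',
    smul_eq_mul, hX, hT] at hzero
  linear_combination -hzero

theorem abs_integral_one_add_mul_partialFst_mul_tiltWeight_le {Lc Cc Cg X T x t : ℝ}
    [IsFiniteMeasure μ] (hB : ∀ᵐ q ∂μ, |q.1| ≤ B) (hcg : ∀ p, ‖fderiv ℝ c p‖ ≤ Lc)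
    (hcb : ∀ p, |c p| ≤ Cc) (hgb : ∀ y, |g y| ≤ Cg) (hx : |x| ≤ X) (ht : |t| ≤ T) :
    |∫ q, (1 + (q.1 - x) * partialFst c x q) * tiltWeight c g x t q ∂μ| ≤
      (1 + Lc * (X + B)) * Real.exp (Cc + Cg + T * B + t * x) * μ.real univ := by
  rw [← Real.norm_eq_abs]
  refine norm_integral_le_of_norm_le_const ?_
  filter_upwards [hB, ae_abs_sub_le hB x] with q hq hqx
  rw [Real.norm_eq_abs, abs_mul, abs_of_pos (tiltWeight_pos x t q)]
  have hdc := abs_one_add_mul_partialFst_le hcg (hqx.trans (add_le_add_left hx B))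
  exact mul_le_mul hdc (tiltWeight_le_of_abs_le hcb hgb hq ht) (tiltWeight_pos x t q).le
    ((abs_nonneg _).trans hdc)

theorem mul_integral_sub_sq_le_integral_sub_sq_mul_tiltWeight [IsFiniteMeasure μ] {Cc Cg T t : ℝ}
    (hB : ∀ᵐ q ∂μ, |q.1| ≤ B) (hc : Continuous c) (hcb : ∀ p, |c p| ≤ Cc)
    (hgm : Measurable g) (hgb : ∀ y, |g y| ≤ Cg) (ht : |t| ≤ T) (x : ℝ) :
    Real.exp (-(Cc + Cg + T * B) + t * x) * ∫ q, (q.1 - x) ^ 2 ∂μ ≤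
      ∫ q, (q.1 - x) ^ 2 * tiltWeight c g x t q ∂μ := by
  have hsq : Integrable (fun q : ℝ × ℝ => (q.1 - x) ^ 2) μ := by
    refine .of_bound (by fun_prop) ((|x| + B) ^ 2) ?_
    filter_upwards [ae_abs_sub_le hB x] with q hq
    rw [Real.norm_eq_abs, abs_pow]
    gcongr
  rw [← integral_const_mul]
  refine integral_mono_ae (hsq.const_mul _)
    (integrable_sub_sq_mul_tiltWeight hB hc hcb hgm hgb _ _) ?_
  filter_upwards [hB] with q hq
  rw [mul_comm]
  exact mul_le_mul_of_nonneg_left (exp_le_tiltWeight_of_abs_le hcb hgb hq ht) (sq_nonneg _)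

end

theorem integral_sq_le_integral_sub_sq {ν : Measure ℝ} [IsProbabilityMeasure ν]
    (hy : Integrable (fun y => y) ν) (hy2 : Integrable (fun y => y ^ 2) ν) (hν0 : ∫ y, y ∂ν = 0)
    (x : ℝ) : ∫ y, y ^ 2 ∂ν ≤ ∫ y, (y - x) ^ 2 ∂ν := by
  have hexpand : ∫ y, (y - x) ^ 2 ∂ν = ∫ y, y ^ 2 ∂ν - 2 * x * ∫ y, y ∂ν + x ^ 2 := by
    have hsq (y : ℝ) : (y - x) ^ 2 = (y ^ 2 - 2 * x * y) + x ^ 2 := by ring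
    simp only [hsq]
    rw [integral_add (f := fun y => y ^ 2 - 2 * x * y) (hy2.sub (hy.const_mul _))
      (integrable_const _), integral_sub hy2 (hy.const_mul _), integral_const_mul, integral_const]
    simp
  rw [hexpand, hν0]
  nlinarith [sq_nonneg x]

theorem abs_le_mul_exp_div_of_mul_eq {d V N M K s σ : ℝ} (hσ : 0 < σ)
    (hV : Real.exp (-K + s) * σ ≤ V) (hN : |N| ≤ M * Real.exp (K + s)) (hdVN : d * V = N) :
    |d| ≤ M * Real.exp (2 * K) / σ := by
  have hE := Real.exp_pos (-K + s)
  rw [le_div_iff₀ hσ, ← mul_le_mul_iff_of_pos_right hE]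
  calc |d| * σ * Real.exp (-K + s) = |d| * (Real.exp (-K + s) * σ) := by ring
    _ ≤ |d| * V := mul_le_mul_of_nonneg_left hV (abs_nonneg d)
    _ = |N| := by rw [← hdVN, abs_mul, abs_of_pos ((mul_pos hE hσ).trans_le hV)]
    _ ≤ M * Real.exp (K + s) := hN
    _ = M * Real.exp (2 * K) * Real.exp (-K + s) := by
        rw [mul_assoc, ← Real.exp_add]; ring_nf

theorem stmt_14_general
    (ν ρ : Measure ℝ) [IsProbabilityMeasure ν] [IsProbabilityMeasure ρ]
    (hν0 : ∫ y, y ∂ν = 0)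
    (B : ℝ) (hB : ∀ᵐ y ∂ν, |y| ≤ B)
    (hVar : 0 < ∫ y, y ^ 2 ∂ν)
    (c : ℝ × ℝ × ℝ → ℝ) (Lc Cc : ℝ) (hc1 : ContDiff ℝ 1 c)
    (hcg : ∀ p, ‖fderiv ℝ c p‖ ≤ Lc) (hcb : ∀ p, |c p| ≤ Cc)
    (g : ℝ → ℝ) (Cg : ℝ) (hgm : Measurable g) (hgb : ∀ y, |g y| ≤ Cg)
    (A a b : ℝ) (hI : Set.Ioo a b ⊆ Set.Icc (-A) A)
    (h : ℝ → ℝ) (Ch : ℝ)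
    (hdiff : ∀ x ∈ Set.Ioo a b, DifferentiableAt ℝ h x)
    (hhb : ∀ x ∈ Set.Ioo a b, |h x| ≤ Ch)
    (hfoc : ∀ x ∈ Set.Ioo a b, ∫ q : ℝ × ℝ,
        (q.1 - x) * Real.exp (-c (x, q.1, q.2) - g q.1 - h x * (q.1 - x)) ∂(ν.prod ρ) = 0) :
    ∀ x ∈ Set.Ioo a b,
      |deriv h x| ≤ (1 + Lc * (A + B)) * Real.exp (2 * (Cc + Cg + Ch * B))
        / ∫ y, y ^ 2 ∂ν := by
  intro x hx
  have hμB : ∀ᵐ q ∂ν.prod ρ, |q.1| ≤ B := Measure.quasiMeasurePreserving_fst.ae hB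
  have hy : Integrable (fun y => y) ν := .of_bound (by fun_prop) B (hB.mono fun y hy => hy)
  have hy2 : Integrable (fun y => y ^ 2) ν := .of_bound (by fun_prop) (B ^ 2) <|
    hB.mono fun y hy => by rw [norm_pow, Real.norm_eq_abs]; gcongr
  have hkey := deriv_mul_integral_sub_sq_mul_tiltWeight hμB hc1 hcg hcb hgm hgb (hdiff x hx)
    (eventually_of_mem (Ioo_mem_nhds hx.1 hx.2) hfoc)
  have hN := abs_integral_one_add_mul_partialFst_mul_tiltWeight_le hμB hcg hcb hgb
    (abs_le.2 (hI hx)) (hhb x hx)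
  have hsq : ∫ y, y ^ 2 ∂ν ≤ ∫ q, (q.1 - x) ^ 2 ∂ν.prod ρ := by
    rw [integral_fun_fst (fun y => (y - x) ^ 2), probReal_univ, one_smul]
    exact integral_sq_le_integral_sub_sq hy hy2 hν0 x
  have hV := (mul_le_mul_of_nonneg_left hsq (Real.exp_pos _).le).trans
    (mul_integral_sub_sq_le_integral_sub_sq_mul_tiltWeight hμB hc1.continuous hcb hgm hgb
      (hhb x hx) x)
  rw [probReal_univ, mul_one, ← abs_neg] at hN
  exact abs_le_mul_exp_div_of_mul_eq hVar hV hN hkey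

theorem stmt_14
    (ν ρ : Measure ℝ) [IsProbabilityMeasure ν] [IsProbabilityMeasure ρ]
    (hνnd : ∀ y₀ : ℝ, ν ≠ Measure.dirac y₀) (hν0 : ∫ y, y ∂ν = 0)
    (B : ℝ) (hB : ∀ᵐ y ∂ν, |y| ≤ B)
    (hVar : 0 < ∫ y, y ^ 2 ∂ν)
    (c : ℝ × ℝ × ℝ → ℝ) (Lc Cc : ℝ) (hc1 : ContDiff ℝ 1 c)
    (hcg : ∀ p, ‖fderiv ℝ c p‖ ≤ Lc) (hcb : ∀ p, |c p| ≤ Cc)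
    (g : ℝ → ℝ) (Cg : ℝ) (hgm : Measurable g) (hgb : ∀ y, |g y| ≤ Cg)
    (A a b : ℝ) (hI : Set.Ioo a b ⊆ Set.Icc (-A) A)
    (h : ℝ → ℝ) (Ch : ℝ)
    (hdiff : ∀ x ∈ Set.Ioo a b, DifferentiableAt ℝ h x)
    (hhb : ∀ x ∈ Set.Ioo a b, |h x| ≤ Ch)
    (hfoc : ∀ x ∈ Set.Ioo a b, ∫ q : ℝ × ℝ,
        (q.1 - x) * Real.exp (-c (x, q.1, q.2) - g q.1 - h x * (q.1 - x)) ∂(ν.prod ρ) = 0) :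
    ∀ x ∈ Set.Ioo a b,
      |deriv h x| ≤ (1 + Lc * (A + B)) * Real.exp (2 * (Cc + Cg + Ch * B))
        / ∫ y, y ^ 2 ∂ν :=
  stmt_14_general ν ρ hν0 B hB hVar c Lc Cc hc1 hcg hcb g Cg hgm hgb A a b hI h Ch hdiff hhb hfoc
end
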